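/- arXiv:2603.15716 — 4 statements merged into one kernel-verified Lean document; each statement's English description precedes it below -/
import Mathlib

section
/- Let Re(w) > 0, μ_η(w) = 0, and suppose η satisfies the rotation number hypothesis with rotation number ρ ≠ 0: sup_{t≥1} |∫_1^t (η(u) - ρ) du| ≤ c̃ < ∞. Then for all t ≥ 1, |ψ(t) - ρ ((w-1)/w) t^{-i Im(w)}| < 2 c̃ |1 - w²| / (1 + Re(w)) · t^{-1}; in particular sup_{t≥1} t |ψ(t) - ρ ((w-1)/w) t^{-i Im(w)}| < ∞. -/
/-!
Because `μ_η(w) = 0`, `ψ(t) = (w - 1) t^{Re w} ∫_t^∞ u^{-1-w} η(u) du`. Writing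
`η = ρ + (η - ρ)`, the constant `ρ` contributes exactly `ρ (w - 1)/w · t^{-i Im w}`, and the rest
is integrated by parts against the primitive `E(v) = ∫_1^v (η - ρ)`, which the rotation number
hypothesis bounds by `c̃`:
`∫_t^∞ u^{-1-w} (η - ρ) = (1 + w) ∫_t^∞ v^{-2-w} E(v) dv - t^{-1-w} E(t)`,
and both terms are at most `|1 + w| c̃ t^{-1-Re w} / (1 + Re w)`, the second one strictly.
As `η` is merely locally integrable, `E` need not be differentiable, so the integration by parts
is done by Fubini on the triangle `t < u ≤ v`, using `u^{-1-w} = (1 + w) ∫_u^∞ v^{-2-w} dv`.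
-/

open MeasureTheory Complex Filter Set

noncomputable def psi (η : ℝ → ℂ) (w : ℂ) (t : ℝ) : ℂ :=
  ((t ^ w.re : ℝ) : ℂ) * (1 + (1 - w) * ∫ u in (1:ℝ)..t, (u : ℂ) ^ (-1 - w) * η u)

noncomputable def mu (η : ℝ → ℂ) (w : ℂ) : ℂ :=
  -1 - (1 - w) * ∫ u in Set.Ioi (1:ℝ), (u : ℂ) ^ (-1 - w) * η u

noncomputable def delta (η : ℝ → ℂ) (s : ℂ) (t : ℝ) : ℂ :=
  (((2 * s.re - 1 : ℝ) : ℂ))⁻¹ * (psi η s t - psi η (1 - (starRingEnd ℂ) s) t)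

section Triangle

variable {E : Type*}

lemma indicator_le_apply_eq_indicator_Iic [Zero E] (g : ℝ × ℝ → E) (u v : ℝ) :
    {p : ℝ × ℝ | p.1 ≤ p.2}.indicator g (u, v) = (Iic v).indicator (fun u => g (u, v)) u := by
  simp [indicator_apply]

lemma indicator_le_apply_eq_indicator_Ici [Zero E] (g : ℝ × ℝ → E) (u v : ℝ) :
    {p : ℝ × ℝ | p.1 ≤ p.2}.indicator g (u, v) = (Ici u).indicator (fun v => g (u, v)) v := by
  simp [indicator_apply]

variable [NormedAddCommGroup E] [NormedSpace ℝ E]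

lemma setIntegral_Ioi_indicator_le_fst (t v : ℝ) (g : ℝ × ℝ → E) :
    ∫ u in Ioi t, {p : ℝ × ℝ | p.1 ≤ p.2}.indicator g (u, v) = ∫ u in Ioc t v, g (u, v) := by
  simp only [indicator_le_apply_eq_indicator_Iic]
  rw [setIntegral_indicator measurableSet_Iic, Ioi_inter_Iic]

lemma setIntegral_Ioi_indicator_le_snd {t u : ℝ} (hu : t < u) (g : ℝ × ℝ → E) :
    ∫ v in Ioi t, {p : ℝ × ℝ | p.1 ≤ p.2}.indicator g (u, v) = ∫ v in Ici u, g (u, v) := by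
  simp only [indicator_le_apply_eq_indicator_Ici]
  rw [setIntegral_indicator measurableSet_Ici, inter_eq_right.2 (Ici_subset_Ioi.2 hu)]

end Triangle

lemma integral_Ioi_integral_Ici_mul_eq {t : ℝ} {K G : ℝ → ℂ}
    (h : Integrable ({p : ℝ × ℝ | p.1 ≤ p.2}.indicator fun p => K p.2 * G p.1)
      ((volume.restrict (Ioi t)).prod (volume.restrict (Ioi t)))) :
    ∫ u in Ioi t, (∫ v in Ici u, K v) * G u = ∫ v in Ioi t, K v * ∫ u in Ioc t v, G u := by
  calc ∫ u in Ioi t, (∫ v in Ici u, K v) * G u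
      = ∫ u in Ioi t, ∫ v in Ioi t,
          {p : ℝ × ℝ | p.1 ≤ p.2}.indicator (fun p => K p.2 * G p.1) (u, v) :=
        setIntegral_congr_fun measurableSet_Ioi fun u hu => by
          rw [setIntegral_Ioi_indicator_le_snd hu]; exact (integral_mul_const _ _).symm
    _ = ∫ v in Ioi t, ∫ u in Ioi t,
          {p : ℝ × ℝ | p.1 ≤ p.2}.indicator (fun p => K p.2 * G p.1) (u, v) :=
        integral_integral_swap h
    _ = ∫ v in Ioi t, K v * ∫ u in Ioc t v, G u := by
        simp only [setIntegral_Ioi_indicator_le_fst, integral_const_mul]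

lemma integrableOn_Ioi_cpow_mul {t : ℝ} (ht : 0 < t) {s : ℂ} (hs : s.re < -1) {f : ℝ → ℂ}
    {C : ℝ} (hf : AEStronglyMeasurable f (volume.restrict (Ioi t)))
    (hfC : ∀ u ∈ Ioi t, ‖f u‖ ≤ C) :
    IntegrableOn (fun u : ℝ => (u : ℂ) ^ s * f u) (Ioi t) := by
  have hpow := integrableOn_Ioi_cpow_of_lt hs ht
  refine Integrable.mono' (hpow.norm.mul_const C) (hpow.aestronglyMeasurable.mul hf) ?_
  filter_upwards [ae_restrict_mem measurableSet_Ioi] with u hu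
  rw [norm_mul]
  exact mul_le_mul_of_nonneg_left (hfC u hu) (norm_nonneg _)

lemma integrable_indicator_le_cpow_mul {t : ℝ} (ht : 0 < t) {s : ℂ} (hs : s.re < -2)
    {f : ℝ → ℂ} {C : ℝ} (hf : AEStronglyMeasurable f (volume.restrict (Ioi t)))
    (hfC : ∀ u ∈ Ioi t, ‖f u‖ ≤ C) :
    Integrable ({p : ℝ × ℝ | p.1 ≤ p.2}.indicator fun p => (p.2 : ℂ) ^ s * f p.1)
      ((volume.restrict (Ioi t)).prod (volume.restrict (Ioi t))) := by
  have hpow := integrableOn_Ioi_cpow_of_lt (by linarith : s.re < -1) ht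
  have hmeas : AEStronglyMeasurable
      ({p : ℝ × ℝ | p.1 ≤ p.2}.indicator fun p => (p.2 : ℂ) ^ s * f p.1)
      ((volume.restrict (Ioi t)).prod (volume.restrict (Ioi t))) :=
    (hpow.aestronglyMeasurable.comp_snd.mul hf.comp_fst).indicator
      (measurableSet_le measurable_fst measurable_snd)
  refine (integrable_prod_iff' hmeas).2 ⟨?_, ?_⟩
  · filter_upwards [ae_restrict_mem measurableSet_Ioi] with v hv
    have hIoc : IntegrableOn (fun u => (v : ℂ) ^ s * f u) (Ioc t v) :=
      IntegrableOn.of_bound measure_Ioc_lt_top ((hf.mono_set Ioc_subset_Ioi_self).const_mul _) _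
        ((ae_restrict_mem measurableSet_Ioc).mono fun u hu => by
          rw [norm_mul]; exact mul_le_mul_of_nonneg_left (hfC u hu.1) (norm_nonneg _))
    simp only [indicator_le_apply_eq_indicator_Iic]
    rw [integrable_indicator_iff measurableSet_Iic, IntegrableOn,
      Measure.restrict_restrict measurableSet_Iic, inter_comm, Ioi_inter_Iic]
    exact hIoc
  · refine Integrable.mono'
      ((integrableOn_Ioi_rpow_of_lt (by linarith : s.re + 1 < -1) ht).const_mul C)
      hmeas.norm.prod_swap.integral_prod_right' ?_
    filter_upwards [ae_restrict_mem measurableSet_Ioi] with v hv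
    have hv0 : 0 < v := ht.trans hv
    have hC : 0 ≤ C := (norm_nonneg _).trans (hfC v hv)
    simp only [norm_indicator_eq_indicator_norm]
    rw [setIntegral_Ioi_indicator_le_fst t v fun p => ‖(p.2 : ℂ) ^ s * f p.1‖]
    calc ‖∫ u in Ioc t v, ‖(v : ℂ) ^ s * f u‖‖
        ≤ ‖(v : ℂ) ^ s‖ * C * volume.real (Ioc t v) :=
          norm_setIntegral_le_of_norm_le_const measure_Ioc_lt_top fun u hu => by
            rw [norm_norm, norm_mul]
            exact mul_le_mul_of_nonneg_left (hfC u hu.1) (norm_nonneg _)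
      _ ≤ v ^ s.re * C * v := by
          rw [norm_cpow_eq_rpow_re_of_pos hv0, Real.volume_real_Ioc_of_le hv.le]
          gcongr; linarith
      _ = C * v ^ (s.re + 1) := by rw [Real.rpow_add_one hv0.ne']; ring

lemma integral_Ioi_cpow_mul_eq_of_primitive {t : ℝ} (ht : 0 < t) {s : ℂ} (hs : s.re < -1)
    {f E : ℝ → ℂ} {C : ℝ} (hf : AEStronglyMeasurable f (volume.restrict (Ioi t)))
    (hfC : ∀ u ∈ Ioi t, ‖f u‖ ≤ C) (hE : ∀ v ∈ Ioi t, ∫ u in Ioc t v, f u = E v - E t) :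
    ∫ u in Ioi t, (u : ℂ) ^ s * f u
      = -s * (∫ v in Ioi t, (v : ℂ) ^ (s - 1) * E v) - (t : ℂ) ^ s * E t := by
  have hs0 : s ≠ 0 := fun h => by simp [h] at hs; linarith
  have hs1 : (s - 1).re < -1 := by simp; linarith
  have hker := integrable_indicator_le_cpow_mul ht (by simp; linarith : (s - 1).re < -2) hf hfC
  have hpow := integrableOn_Ioi_cpow_of_lt hs1 ht
  have hIoi : ∀ u : ℝ, 0 < u → ∫ v in Ioi u, (v : ℂ) ^ (s - 1) = -(u : ℂ) ^ s / s :=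
    fun u hu => by rw [integral_Ioi_cpow_of_lt hs1 hu, sub_add_cancel]
  have hprim : Integrable (fun v : ℝ => (v : ℂ) ^ (s - 1) * ∫ u in Ioc t v, f u)
      (volume.restrict (Ioi t)) := by
    simpa only [setIntegral_Ioi_indicator_le_fst, integral_const_mul]
      using hker.integral_prod_right
  have hEint : IntegrableOn (fun v : ℝ => (v : ℂ) ^ (s - 1) * E v) (Ioi t) :=
    IntegrableOn.congr_fun (hprim.add (hpow.mul_const (E t)))
      (fun v hv => by simp only [Pi.add_apply]; rw [hE v hv]; ring) measurableSet_Ioi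
  calc ∫ u in Ioi t, (u : ℂ) ^ s * f u
      = ∫ u in Ioi t, -s * ((∫ v in Ici u, (v : ℂ) ^ (s - 1)) * f u) :=
        setIntegral_congr_fun measurableSet_Ioi fun u hu => by
          rw [integral_Ici_eq_integral_Ioi, hIoi u (ht.trans hu)]; field_simp
    _ = -s * ∫ v in Ioi t, ((v : ℂ) ^ (s - 1) * E v - E t * (v : ℂ) ^ (s - 1)) := by
        rw [integral_const_mul, integral_Ioi_integral_Ici_mul_eq hker]
        congr 1
        exact setIntegral_congr_fun measurableSet_Ioi fun v hv => by rw [hE v hv]; ring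
    _ = -s * (∫ v in Ioi t, (v : ℂ) ^ (s - 1) * E v) - (t : ℂ) ^ s * E t := by
        rw [integral_sub hEint (hpow.const_mul _), integral_const_mul, hIoi t ht]
        field_simp
        ring

lemma norm_setIntegral_Ioi_cpow_mul_le {t : ℝ} (ht : 0 < t) {s : ℂ} (hs : s.re < -1)
    {E : ℝ → ℂ} {M : ℝ} (hEM : ∀ v ∈ Ioi t, ‖E v‖ ≤ M) :
    ‖∫ v in Ioi t, (v : ℂ) ^ s * E v‖ ≤ M * (t ^ (s.re + 1) / -(s.re + 1)) := by
  calc ‖∫ v in Ioi t, (v : ℂ) ^ s * E v‖ ≤ ∫ v in Ioi t, M * v ^ s.re :=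
        norm_integral_le_of_norm_le ((integrableOn_Ioi_rpow_of_lt hs ht).const_mul M) <| by
          filter_upwards [ae_restrict_mem measurableSet_Ioi] with v hv
          rw [norm_mul, norm_cpow_eq_rpow_re_of_pos (ht.trans hv), mul_comm]
          exact mul_le_mul_of_nonneg_right (hEM v hv) (Real.rpow_nonneg (ht.trans hv).le _)
    _ = M * (t ^ (s.re + 1) / -(s.re + 1)) := by
        rw [integral_const_mul, integral_Ioi_rpow_of_lt hs ht, neg_div, div_neg]

lemma norm_integral_Ioi_cpow_neg_one_sub_mul_lt {t : ℝ} (ht : 0 < t) {w : ℂ} (hw : 0 < w.re)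
    {f E : ℝ → ℂ} {C M : ℝ} (hf : AEStronglyMeasurable f (volume.restrict (Ioi t)))
    (hfC : ∀ u ∈ Ioi t, ‖f u‖ ≤ C) (hE : ∀ v ∈ Ioi t, ∫ u in Ioc t v, f u = E v - E t)
    (hEM : ∀ v ∈ Ici t, ‖E v‖ < M) :
    ‖∫ u in Ioi t, (u : ℂ) ^ (-1 - w) * f u‖
      < 2 * ‖1 + w‖ * M / (1 + w.re) * t ^ (-(1 + w.re)) := by
  set τ := t ^ (-(1 + w.re))
  have hre : ((-1 : ℂ) - w).re = -(1 + w.re) := by simp; ring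
  have hM : 0 ≤ M := (norm_nonneg _).trans (hEM t self_mem_Ici).le
  have hτ : 0 < τ := by positivity
  have hnorm : (1 : ℝ) + w.re ≤ ‖1 + w‖ := by simpa using re_le_norm (1 + w)
  have hI := norm_setIntegral_Ioi_cpow_mul_le ht (by simp; linarith : ((-1 : ℂ) - w - 1).re < -1)
    fun v hv => (hEM v (Ioi_subset_Ici_self hv)).le
  rw [show ((-1 : ℂ) - w - 1).re + 1 = -(1 + w.re) by simp; ring, neg_neg] at hI
  have hEt : ‖(t : ℂ) ^ (-1 - w) * E t‖ < τ * M := by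
    rw [norm_mul, norm_cpow_eq_rpow_re_of_pos ht, hre]
    exact mul_lt_mul_of_pos_left (hEM t self_mem_Ici) hτ
  have hτM : τ * M ≤ ‖1 + w‖ * (M * (τ / (1 + w.re))) := by
    rw [mul_div_assoc', mul_div_assoc', le_div_iff₀ (by linarith)]
    nlinarith [mul_nonneg hM hτ.le]
  rw [integral_Ioi_cpow_mul_eq_of_primitive ht (by rw [hre]; linarith) hf hfC hE,
    show -((-1 : ℂ) - w) = 1 + w by ring]
  calc ‖(1 + w) * (∫ v in Ioi t, (v : ℂ) ^ (-1 - w - 1) * E v) - (t : ℂ) ^ (-1 - w) * E t‖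
      ≤ ‖1 + w‖ * ‖∫ v in Ioi t, (v : ℂ) ^ (-1 - w - 1) * E v‖
          + ‖(t : ℂ) ^ (-1 - w) * E t‖ := by
        rw [← norm_mul]; exact norm_sub_le _ _
    _ < ‖1 + w‖ * (M * (τ / (1 + w.re))) + τ * M :=
        add_lt_add_of_le_of_lt (mul_le_mul_of_nonneg_left hI (norm_nonneg _)) hEt
    _ ≤ 2 * (‖1 + w‖ * (M * (τ / (1 + w.re)))) := by linarith
    _ = 2 * ‖1 + w‖ * M / (1 + w.re) * τ := by ring

lemma ofReal_rpow_re_mul_cpow_neg {t : ℝ} (ht : 0 < t) (w : ℂ) :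
    ((t ^ w.re : ℝ) : ℂ) * (t : ℂ) ^ (-w) = (t : ℂ) ^ (-(I * w.im)) := by
  rw [ofReal_cpow ht.le, ← cpow_add _ _ (ofReal_ne_zero.2 ht.ne')]
  congr 1
  apply Complex.ext <;> simp

lemma psi_eq_of_mu_eq_zero {η : ℝ → ℂ} {w : ℂ}
    (hint : IntegrableOn (fun u : ℝ => (u : ℂ) ^ (-1 - w) * η u) (Ioi 1)) (hmu : mu η w = 0)
    {t : ℝ} (ht : 1 ≤ t) :
    psi η w t = ((t ^ w.re : ℝ) : ℂ) * ((w - 1) * ∫ u in Ioi t, (u : ℂ) ^ (-1 - w) * η u) := by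
  have hsplit := setIntegral_union (Ioc_disjoint_Ioi le_rfl) measurableSet_Ioi
    (hint.mono_set Ioc_subset_Ioi_self) (hint.mono_set (Ioi_subset_Ioi ht))
  rw [Ioc_union_Ioi_eq_Ioi ht, ← intervalIntegral.integral_of_le ht] at hsplit
  rw [mu] at hmu
  rw [psi]
  congr 1
  linear_combination (-1 : ℂ) * hmu + (w - 1) * hsplit

lemma psi_sub_eq_of_mu_eq_zero {η : ℝ → ℂ} {w : ℂ} (hw : 0 < w.re)
    (hint : IntegrableOn (fun u : ℝ => (u : ℂ) ^ (-1 - w) * η u) (Ioi 1)) (hmu : mu η w = 0)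
    (ρ : ℂ) {t : ℝ} (ht : 1 ≤ t) :
    psi η w t - ρ * ((w - 1) / w) * (t : ℂ) ^ (-(I * w.im))
      = ((t ^ w.re : ℝ) : ℂ) * ((w - 1) * ∫ u in Ioi t, (u : ℂ) ^ (-1 - w) * (η u - ρ)) := by
  have ht0 : 0 < t := one_pos.trans_le ht
  have hw0 : w ≠ 0 := fun h => by simp [h] at hw
  have hs : ((-1 : ℂ) - w).re < -1 := by simp; linarith
  have hpow := integrableOn_Ioi_cpow_of_lt hs ht0
  have hρ : ∫ u in Ioi t, (u : ℂ) ^ (-1 - w) * ρ = ρ * ((t : ℂ) ^ (-w) / w) := by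
    rw [integral_mul_const, integral_Ioi_cpow_of_lt hs ht0]
    ring_nf
  simp only [mul_sub]
  rw [integral_sub (hint.mono_set (Ioi_subset_Ioi ht)) (hpow.mul_const ρ), hρ,
    psi_eq_of_mu_eq_zero hint hmu ht, ← ofReal_rpow_re_mul_cpow_neg ht0]
  ring

lemma norm_psi_sub_lt {η : ℝ → ℂ} {w ρ : ℂ} {c ctil : ℝ} (hw : 0 < w.re)
    (hc : ∀ t : ℝ, 1 ≤ t → ‖η t‖ ≤ c) (hloc : LocallyIntegrableOn η (Ici 1))
    (hrot : ∀ t : ℝ, 1 ≤ t → ‖∫ u in (1:ℝ)..t, (η u - ρ)‖ < ctil) (hmu : mu η w = 0)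
    {t : ℝ} (ht : 1 ≤ t) :
    ‖psi η w t - ρ * ((w - 1) / w) * (t : ℂ) ^ (-(I * w.im))‖
      < 2 * ctil * ‖1 - w ^ 2‖ / (1 + w.re) * t⁻¹ := by
  have ht0 : 0 < t := one_pos.trans_le ht
  have hw1 : w - 1 ≠ 0 := by
    rintro h
    rw [sub_eq_zero.1 h, mu] at hmu
    simp at hmu
  have hηm : AEStronglyMeasurable η (volume.restrict (Ioi 1)) :=
    hloc.aestronglyMeasurable.mono_set Ioi_subset_Ici_self
  have hint : IntegrableOn (fun u : ℝ => (u : ℂ) ^ (-1 - w) * η u) (Ioi 1) :=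
    integrableOn_Ioi_cpow_mul one_pos (by simp; linarith) hηm fun u hu => hc u hu.le
  have hii : ∀ x, 1 ≤ x → IntervalIntegrable (fun u => η u - ρ) volume 1 x := fun x hx =>
    ((intervalIntegrable_iff_integrableOn_Icc_of_le hx).2
      (hloc.integrableOn_compact_subset Icc_subset_Ici_self isCompact_Icc)).sub
      intervalIntegrable_const
  have hE : ∀ v ∈ Ioi t, ∫ u in Ioc t v, (η u - ρ)
      = (∫ u in (1:ℝ)..v, (η u - ρ)) - ∫ u in (1:ℝ)..t, (η u - ρ) := fun v hv => by
    rw [intervalIntegral.integral_interval_sub_left (hii v (ht.trans hv.le)) (hii t ht),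
      intervalIntegral.integral_of_le hv.le]
  have hR := norm_integral_Ioi_cpow_neg_one_sub_mul_lt ht0 hw
    ((hηm.mono_set (Ioi_subset_Ioi ht)).sub aestronglyMeasurable_const)
    (fun u hu => (norm_sub_le _ _).trans (add_le_add_left (hc u (ht.trans hu.le)) _)) hE
    fun v hv => hrot v (ht.trans hv)
  rw [psi_sub_eq_of_mu_eq_zero hw hint hmu ρ ht, norm_mul, norm_mul, norm_real,
    Real.norm_of_nonneg (by positivity)]
  calc t ^ w.re * (‖w - 1‖ * ‖∫ u in Ioi t, (u : ℂ) ^ (-1 - w) * (η u - ρ)‖)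
      < t ^ w.re * (‖w - 1‖ * (2 * ‖1 + w‖ * ctil / (1 + w.re) * t ^ (-(1 + w.re)))) :=
        mul_lt_mul_of_pos_left (mul_lt_mul_of_pos_left hR (norm_pos_iff.2 hw1)) (by positivity)
    _ = 2 * ctil * ‖1 - w ^ 2‖ / (1 + w.re) * t⁻¹ := by
        rw [show 1 - w ^ 2 = -((w - 1) * (1 + w)) by ring, norm_neg, norm_mul,
          ← Real.rpow_neg_one, show (-1 : ℝ) = w.re + -(1 + w.re) by ring, Real.rpow_add ht0]
        ring

theorem stmt4_general (η : ℝ → ℂ) (w : ℂ) (c ctil : ℝ) (ρ : ℂ)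
    (hw : 0 < w.re)
    (hc : ∀ t : ℝ, 1 ≤ t → ‖η t‖ ≤ c)
    (hloc : LocallyIntegrableOn η (Set.Ici 1))
    (hrot : ∀ t : ℝ, 1 ≤ t → ‖∫ u in (1:ℝ)..t, (η u - ρ)‖ < ctil)
    (hmu : mu η w = 0) :
    (∀ t : ℝ, 1 ≤ t →
      ‖psi η w t - ρ * ((w - 1) / w) * (t : ℂ) ^ (-(Complex.I * w.im))‖
        < 2 * ctil * ‖1 - w ^ 2‖ / (1 + w.re) * t⁻¹) ∧
    ∃ K : ℝ, ∀ t : ℝ, 1 ≤ t →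
      t * ‖psi η w t - ρ * ((w - 1) / w) * (t : ℂ) ^ (-(Complex.I * w.im))‖ ≤ K := by
  have key := fun t (ht : 1 ≤ t) => norm_psi_sub_lt hw hc hloc hrot hmu ht
  refine ⟨key, 2 * ctil * ‖1 - w ^ 2‖ / (1 + w.re), fun t ht => ?_⟩
  have ht0 : 0 < t := one_pos.trans_le ht
  calc t * ‖psi η w t - ρ * ((w - 1) / w) * (t : ℂ) ^ (-(I * w.im))‖
      ≤ t * (2 * ctil * ‖1 - w ^ 2‖ / (1 + w.re) * t⁻¹) := by gcongr; exact (key t ht).le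
    _ = 2 * ctil * ‖1 - w ^ 2‖ / (1 + w.re) := by field_simp

/-- if Re(w) > 0, μ_η(w) = 0 and η satisfies the rotation number
hypothesis with rotation number ρ ≠ 0 and strict bound c̃, then
|ψ(t) - ρ ((w-1)/w) t^{-i Im w}| < 2 c̃ |1-w²|/(1+Re w) · t⁻¹ for all t ≥ 1,
and in particular sup_{t≥1} t |ψ(t) - ρ ((w-1)/w) t^{-i Im w}| < ∞. -/
theorem stmt4 (η : ℝ → ℂ) (w : ℂ) (c ctil : ℝ) (ρ : ℂ)
    (hw : 0 < w.re) (hwim : w.im ≠ 0)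
    (hc : ∀ t : ℝ, 1 ≤ t → ‖η t‖ ≤ c)
    (hloc : LocallyIntegrableOn η (Set.Ici 1))
    (hρ : ρ ≠ 0)
    (hrot : ∀ t : ℝ, 1 ≤ t → ‖∫ u in (1:ℝ)..t, (η u - ρ)‖ < ctil)
    (hmu : mu η w = 0) :
    (∀ t : ℝ, 1 ≤ t →
      ‖psi η w t - ρ * ((w - 1) / w) * (t : ℂ) ^ (-(Complex.I * w.im))‖
        < 2 * ctil * ‖1 - w ^ 2‖ / (1 + w.re) * t⁻¹) ∧
    ∃ K : ℝ, ∀ t : ℝ, 1 ≤ t →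
      t * ‖psi η w t - ρ * ((w - 1) / w) * (t : ℂ) ^ (-(Complex.I * w.im))‖ ≤ K :=
  stmt4_general η w c ctil ρ hw hc hloc hrot hmu
end

section
/- For s = σ + iτ with σ ∈ [0,1], σ ≠ 1/2, τ ≠ 0, the functions x_s and x_{1-s̄} (with x_w(t) = t^{-1/2} ψ_w(t)) satisfy the sum identity: x_s(t) + x_{1-s̄}(t) = (σ - 1/2) ∫_1^t u^{-1} (x_s(u) - x_{1-s̄}(u)) du + 2 + (1 - 2iτ) ∫_1^t u^{-3/2 - iτ} η(u) du. -/
open MeasureTheory Complex Filter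

/-- x_w(t) = t^{-1/2} ψ_{η,w}(t). -/
noncomputable def xw (η : ℝ → ℂ) (w : ℂ) (t : ℝ) : ℂ :=
  ((t ^ (-(1/2) : ℝ) : ℝ) : ℂ) * psi η w t

section Aux

lemma aux_cont_cpow (w : ℂ) {K : Set ℝ} (hK : K ⊆ Set.Ici 1) :
    ContinuousOn (fun u : ℝ => (u : ℂ) ^ w) K := by
  intro u hu
  have hu1 : (1:ℝ) ≤ u := hK hu
  refine (ContinuousAt.cpow (Complex.continuous_ofReal.continuousAt) continuousAt_const
    ?_).continuousWithinAt
  rw [Complex.mem_slitPlane_iff]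
  left
  simpa using lt_of_lt_of_le one_pos hu1

lemma aux_cont_rpowC (r : ℝ) {K : Set ℝ} (hK : K ⊆ Set.Ici 1) :
    ContinuousOn (fun u : ℝ => ((u ^ r : ℝ) : ℂ)) K :=
  Complex.continuous_ofReal.comp_continuousOn fun u hu =>
    (Real.continuousAt_rpow_const u r
      (Or.inl (ne_of_gt (lt_of_lt_of_le one_pos (hK hu))))).continuousWithinAt

lemma fw_int (η : ℝ → ℂ) (hloc : LocallyIntegrableOn η (Set.Ici 1)) (w : ℂ) {t : ℝ}
    (ht : 1 ≤ t) :
    IntegrableOn (fun u : ℝ => (u : ℂ) ^ w * η u) (Set.Icc 1 t) := by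
  have h1 : IntegrableOn η (Set.Icc 1 t) :=
    hloc.integrableOn_compact_subset Set.Icc_subset_Ici_self isCompact_Icc
  exact h1.continuousOn_mul (aux_cont_cpow w Set.Icc_subset_Ici_self) isCompact_Icc

lemma fw_intI (η : ℝ → ℂ) (hloc : LocallyIntegrableOn η (Set.Ici 1)) (w : ℂ) {t : ℝ}
    (ht : 1 ≤ t) :
    IntervalIntegrable (fun u : ℝ => (u : ℂ) ^ w * η u) volume 1 t := by
  have : IntegrableOn (fun u : ℝ => (u : ℂ) ^ w * η u) (Set.uIcc 1 t) := by
    rw [Set.uIcc_of_le ht]; exact fw_int η hloc w ht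
  exact this.intervalIntegrable

lemma gw_intI (r : ℝ) {t : ℝ} (ht : 1 ≤ t) :
    IntervalIntegrable (fun u : ℝ => ((u ^ r : ℝ) : ℂ)) volume 1 t := by
  apply ContinuousOn.intervalIntegrable
  apply aux_cont_rpowC
  rw [Set.uIcc_of_le ht]
  exact Set.Icc_subset_Ici_self

lemma pow_integral' {r v t : ℝ} (hv : 0 < v) (hvt : v ≤ t) (hr : r ≠ 0) :
    ∫ u in v..t, ((u ^ (r - 1) : ℝ) : ℂ) = (((t ^ r - v ^ r) / r : ℝ) : ℂ) := by
  rw [intervalIntegral.integral_ofReal]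
  norm_cast
  rw [integral_rpow (Or.inr ⟨fun h => hr (by linarith), fun h0 => by
    rw [Set.uIcc_of_le hvt] at h0; exact absurd h0.1 (not_le.mpr hv)⟩)]
  rw [show r - 1 + 1 = r from by ring]

lemma triangle_swap {f g : ℝ → ℂ} {t : ℝ} (ht : 1 ≤ t)
    (hf : IntegrableOn f (Set.Ioc 1 t)) (hg : IntegrableOn g (Set.Ioc 1 t)) :
    (∫ u in (1:ℝ)..t, g u * ∫ v in (1:ℝ)..u, f v)
      = ∫ v in (1:ℝ)..t, f v * ∫ u in v..t, g u := by
  have hmeas : MeasurableSet {p : ℝ × ℝ | p.2 ≤ p.1} :=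
    measurableSet_le measurable_snd measurable_fst
  set μ := volume.restrict (Set.Ioc (1:ℝ) t) with hμ
  have hK : Integrable (Function.uncurry fun u v =>
      ({p : ℝ × ℝ | p.2 ≤ p.1}.indicator (fun p => g p.1 * f p.2) (u, v))) (μ.prod μ) := by
    exact (hg.mul_prod hf).indicator hmeas
  have hswap := MeasureTheory.integral_integral_swap hK
  rw [intervalIntegral.integral_of_le ht, intervalIntegral.integral_of_le ht]
  calc ∫ u in Set.Ioc (1:ℝ) t, g u * ∫ v in (1:ℝ)..u, f v
      = ∫ u, (∫ v, ({p : ℝ × ℝ | p.2 ≤ p.1}.indicator (fun p => g p.1 * f p.2) (u, v)) ∂μ) ∂μ := by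
        refine setIntegral_congr_fun measurableSet_Ioc (fun u hu => ?_)
        have h1 : (fun v => ({p : ℝ × ℝ | p.2 ≤ p.1}.indicator (fun p => g p.1 * f p.2) (u, v)))
            = (Set.Iic u).indicator (fun v => g u * f v) := by
          funext v
          by_cases h : v ≤ u <;> simp [Set.indicator, h]
        have hset : Set.Iic u ∩ Set.Ioc 1 t = Set.Ioc 1 u := by
          ext v
          simp only [Set.mem_inter_iff, Set.mem_Iic, Set.mem_Ioc]
          exact ⟨fun h => ⟨h.2.1, h.1⟩, fun h => ⟨h.2, h.1, le_trans h.2 hu.2⟩⟩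
        rw [h1, MeasureTheory.integral_indicator measurableSet_Iic, hμ,
          Measure.restrict_restrict measurableSet_Iic, hset,
          MeasureTheory.integral_const_mul, intervalIntegral.integral_of_le hu.1.le]
    _ = ∫ v, (∫ u, ({p : ℝ × ℝ | p.2 ≤ p.1}.indicator (fun p => g p.1 * f p.2) (u, v)) ∂μ) ∂μ :=
        hswap
    _ = ∫ v in Set.Ioc (1:ℝ) t, f v * ∫ u in v..t, g u := by
        refine setIntegral_congr_fun measurableSet_Ioc (fun v hv => ?_)
        have h1 : (fun u => ({p : ℝ × ℝ | p.2 ≤ p.1}.indicator (fun p => g p.1 * f p.2) (u, v)))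
            = (Set.Ici v).indicator (fun u => g u * f v) := by
          funext u
          by_cases h : v ≤ u <;> simp [Set.indicator, h]
        have hset : Set.Ici v ∩ Set.Ioc 1 t = Set.Icc v t := by
          ext u
          simp only [Set.mem_inter_iff, Set.mem_Ici, Set.mem_Ioc, Set.mem_Icc]
          exact ⟨fun h => ⟨h.1, h.2.2⟩, fun h => ⟨h.1, lt_of_lt_of_le hv.1 h.1, h.2⟩⟩
        rw [h1, MeasureTheory.integral_indicator measurableSet_Ici, hμ,
          Measure.restrict_restrict measurableSet_Ici, hset,
          MeasureTheory.integral_mul_const, MeasureTheory.integral_Icc_eq_integral_Ioc,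
          ← intervalIntegral.integral_of_le hv.2, mul_comm]

lemma cpow_split {v : ℝ} (hv : 1 ≤ v) (w : ℂ) (z : ℂ) :
    (v : ℂ) ^ (-1 - w) * z * ((v ^ (w.re - 1/2) : ℝ) : ℂ)
      = (v : ℂ) ^ (-(3/2) - Complex.I * (w.im : ℂ)) * z := by
  have hv0 : (0:ℝ) < v := lt_of_lt_of_le one_pos hv
  rw [Complex.ofReal_cpow hv0.le, mul_right_comm,
    ← Complex.cpow_add _ _ (by exact_mod_cast ne_of_gt hv0)]
  congr 2
  have hw : (w.re : ℂ) + (w.im : ℂ) * Complex.I = w := Complex.re_add_im w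
  push_cast
  linear_combination hw

lemma key (η : ℝ → ℂ) (hloc : LocallyIntegrableOn η (Set.Ici 1)) {t : ℝ} (ht : 1 ≤ t)
    (w : ℂ) (hw : w.re ≠ 1/2) :
    ((w.re : ℂ) - 1/2) * ∫ u in (1:ℝ)..t,
        ((u ^ (w.re - 1/2 - 1) : ℝ) : ℂ) * (∫ v in (1:ℝ)..u, (v : ℂ) ^ (-1 - w) * η v)
      = ((t ^ (w.re - 1/2) : ℝ) : ℂ) * (∫ v in (1:ℝ)..t, (v : ℂ) ^ (-1 - w) * η v)
        - ∫ v in (1:ℝ)..t, (v : ℂ) ^ (-(3/2) - Complex.I * (w.im : ℂ)) * η v := by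
  set r : ℝ := w.re - 1/2 with hrdef
  have hr : r ≠ 0 := sub_ne_zero.mpr hw
  have hfInt : IntegrableOn (fun v : ℝ => (v : ℂ) ^ (-1 - w) * η v) (Set.Ioc 1 t) :=
    (fw_int η hloc (-1 - w) ht).mono_set Set.Ioc_subset_Icc_self
  have hgInt : IntegrableOn (fun u : ℝ => ((u ^ (r - 1) : ℝ) : ℂ)) (Set.Ioc 1 t) := by
    apply IntegrableOn.mono_set _ Set.Ioc_subset_Icc_self
    exact (aux_cont_rpowC (r - 1) Set.Icc_subset_Ici_self).integrableOn_compact isCompact_Icc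
  rw [show (fun u : ℝ => ((u ^ (r - 1) : ℝ) : ℂ) *
      (∫ v in (1:ℝ)..u, (v : ℂ) ^ (-1 - w) * η v))
      = fun u : ℝ => ((u ^ (r - 1) : ℝ) : ℂ) *
      (∫ v in (1:ℝ)..u, (v : ℂ) ^ (-1 - w) * η v) from rfl,
    triangle_swap ht hfInt hgInt]
  have hin : Set.EqOn
      (fun v : ℝ => (v : ℂ) ^ (-1 - w) * η v * ∫ u in v..t, ((u ^ (r - 1) : ℝ) : ℂ))
      (fun v : ℝ => ((t ^ r / r : ℝ) : ℂ) * ((v : ℂ) ^ (-1 - w) * η v)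
        - ((r⁻¹ : ℝ) : ℂ) * ((v : ℂ) ^ (-(3/2) - Complex.I * (w.im : ℂ)) * η v))
      (Set.uIcc 1 t) := by
    intro v hv
    rw [Set.uIcc_of_le ht] at hv
    have hv0 : (0:ℝ) < v := lt_of_lt_of_le one_pos hv.1
    simp only
    rw [pow_integral' hv0 hv.2 hr]
    calc (v : ℂ) ^ (-1 - w) * η v * (((t ^ r - v ^ r) / r : ℝ) : ℂ)
        = ((t ^ r / r : ℝ) : ℂ) * ((v : ℂ) ^ (-1 - w) * η v)
          - ((r⁻¹ : ℝ) : ℂ) * ((v : ℂ) ^ (-1 - w) * η v * ((v ^ r : ℝ) : ℂ)) := by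
          push_cast
          ring
      _ = _ := by rw [cpow_split hv.1 w (η v)]
  rw [intervalIntegral.integral_congr hin, intervalIntegral.integral_sub
      ((fw_intI η hloc (-1 - w) ht).const_mul _)
      ((fw_intI η hloc (-(3/2) - Complex.I * (w.im : ℂ)) ht).const_mul _),
    intervalIntegral.integral_const_mul, intervalIntegral.integral_const_mul]
  have h1 : ((w.re : ℂ) - 1/2) * ((t ^ r / r : ℝ) : ℂ) = ((t ^ r : ℝ) : ℂ) := by
    rw [show ((w.re : ℂ) - 1/2) = ((r : ℝ) : ℂ) from by rw [hrdef]; push_cast; ring,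
      ← Complex.ofReal_mul]
    congr 1
    field_simp
  have h2 : ((w.re : ℂ) - 1/2) * ((r⁻¹ : ℝ) : ℂ) = 1 := by
    rw [show ((w.re : ℂ) - 1/2) = ((r : ℝ) : ℂ) from by rw [hrdef]; push_cast; ring,
      ← Complex.ofReal_mul]
    norm_cast
    field_simp
  linear_combination (∫ v in (1:ℝ)..t, (v : ℂ) ^ (-1 - w) * η v) * h1
    - (∫ v in (1:ℝ)..t, (v : ℂ) ^ (-(3/2) - Complex.I * (w.im : ℂ)) * η v) * h2

end Aux

/-- the sum identity for x_s and x_{1-conj s}. -/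
theorem stmt8 (η : ℝ → ℂ) (s : ℂ) (c : ℝ)
    (hc : ∀ t : ℝ, 1 ≤ t → ‖η t‖ ≤ c)
    (hloc : LocallyIntegrableOn η (Set.Ici 1))
    (hre : s.re ∈ Set.Icc (0:ℝ) 1) (hre' : s.re ≠ 1/2) (him : s.im ≠ 0) :
    ∀ t : ℝ, 1 ≤ t →
      xw η s t + xw η (1 - (starRingEnd ℂ) s) t
        = ((s.re : ℂ) - 1/2) *
            (∫ u in (1:ℝ)..t, (u : ℂ)⁻¹ * (xw η s u - xw η (1 - (starRingEnd ℂ) s) u))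
          + 2
          + (1 - 2 * Complex.I * s.im) *
              ∫ u in (1:ℝ)..t, (u : ℂ) ^ (-(3/2) - Complex.I * s.im) * η u := by
  intro t ht
  have ht0 : (0:ℝ) < t := lt_of_lt_of_le one_pos ht
  set w2 : ℂ := 1 - (starRingEnd ℂ) s with hw2
  have hw2re : w2.re = 1 - s.re := by simp [hw2]
  have hw2im : w2.im = s.im := by simp [hw2]
  have h1w2 : 1 - w2 = (starRingEnd ℂ) s := by rw [hw2]; ring
  have hxw : ∀ w : ℂ, ∀ u : ℝ, 0 < u → xw η w u
      = ((u ^ (w.re - 1/2) : ℝ) : ℂ)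
        * (1 + (1 - w) * ∫ v in (1:ℝ)..u, (v : ℂ) ^ (-1 - w) * η v) := by
    intro w u hu
    unfold xw psi
    rw [← mul_assoc, ← Complex.ofReal_mul, ← Real.rpow_add hu,
      show -(1/2 : ℝ) + w.re = w.re - 1/2 from by ring]
  have hpow : ∀ u : ℝ, 0 < u → ∀ r : ℝ, (u : ℂ)⁻¹ * ((u ^ r : ℝ) : ℂ) = ((u ^ (r - 1) : ℝ) : ℂ) := by
    intro u hu r
    rw [← Complex.ofReal_inv, ← Complex.ofReal_mul]
    congr 1
    rw [Real.rpow_sub hu, Real.rpow_one]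
    ring
  have hcong : Set.EqOn (fun u : ℝ => (u : ℂ)⁻¹ * (xw η s u - xw η w2 u))
      (fun u : ℝ => (((u ^ (s.re - 1/2 - 1) : ℝ)) : ℂ)
          + (1 - s) * ((((u ^ (s.re - 1/2 - 1) : ℝ)) : ℂ)
              * ∫ v in (1:ℝ)..u, (v : ℂ) ^ (-1 - s) * η v)
        - ((((u ^ (w2.re - 1/2 - 1) : ℝ)) : ℂ)
          + (starRingEnd ℂ) s * ((((u ^ (w2.re - 1/2 - 1) : ℝ)) : ℂ)
              * ∫ v in (1:ℝ)..u, (v : ℂ) ^ (-1 - w2) * η v))) (Set.uIcc 1 t) := by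
    intro u hu
    rw [Set.uIcc_of_le ht] at hu
    have hu0 : (0:ℝ) < u := lt_of_lt_of_le one_pos hu.1
    simp only
    rw [hxw s u hu0, hxw w2 u hu0, h1w2, mul_sub, ← mul_assoc, ← mul_assoc,
      hpow u hu0, hpow u hu0]
    ring
  have hA1c : ContinuousOn (fun x => ∫ v in (1:ℝ)..x, (v : ℂ) ^ (-1 - s) * η v)
      (Set.uIcc 1 t) := by
    apply intervalIntegral.continuousOn_primitive_interval
    rw [Set.uIcc_of_le ht]
    exact fw_int η hloc (-1 - s) ht
  have hA2c : ContinuousOn (fun x => ∫ v in (1:ℝ)..x, (v : ℂ) ^ (-1 - w2) * η v)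
      (Set.uIcc 1 t) := by
    apply intervalIntegral.continuousOn_primitive_interval
    rw [Set.uIcc_of_le ht]
    exact fw_int η hloc (-1 - w2) ht
  have hg1 := gw_intI (s.re - 1/2 - 1) ht
  have hg2 := gw_intI (w2.re - 1/2 - 1) ht
  have hI2 : IntervalIntegrable (fun u : ℝ => (((u ^ (s.re - 1/2 - 1) : ℝ)) : ℂ)
      * ∫ v in (1:ℝ)..u, (v : ℂ) ^ (-1 - s) * η v) volume 1 t :=
    hg1.mul_continuousOn hA1c
  have hI4 : IntervalIntegrable (fun u : ℝ => (((u ^ (w2.re - 1/2 - 1) : ℝ)) : ℂ)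
      * ∫ v in (1:ℝ)..u, (v : ℂ) ^ (-1 - w2) * η v) volume 1 t :=
    hg2.mul_continuousOn hA2c
  rw [intervalIntegral.integral_congr hcong,
    intervalIntegral.integral_sub (hg1.add (hI2.const_mul _)) (hg2.add (hI4.const_mul _)),
    intervalIntegral.integral_add hg1 (hI2.const_mul _),
    intervalIntegral.integral_add hg2 (hI4.const_mul _),
    intervalIntegral.integral_const_mul, intervalIntegral.integral_const_mul]
  have hd : s.re - 1/2 ≠ 0 := sub_ne_zero.mpr hre'
  have E2 : ((s.re : ℂ) - 1/2) * ∫ u in (1:ℝ)..t, (((u ^ (s.re - 1/2 - 1) : ℝ)) : ℂ)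
      = ((t ^ (s.re - 1/2) : ℝ) : ℂ) - 1 := by
    rw [pow_integral' one_pos ht hd, Real.one_rpow,
      show ((s.re : ℂ) - 1/2) = ((s.re - 1/2 : ℝ) : ℂ) from by push_cast; ring,
      ← Complex.ofReal_mul, mul_div_cancel₀ _ hd]
    push_cast
    ring
  have hd2 : w2.re - 1/2 ≠ 0 := by
    rw [hw2re]; intro h; exact hre' (by linarith)
  have E3 : ((w2.re : ℂ) - 1/2) * ∫ u in (1:ℝ)..t, (((u ^ (w2.re - 1/2 - 1) : ℝ)) : ℂ)
      = ((t ^ (w2.re - 1/2) : ℝ) : ℂ) - 1 := by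
    rw [pow_integral' one_pos ht hd2, Real.one_rpow,
      show ((w2.re : ℂ) - 1/2) = ((w2.re - 1/2 : ℝ) : ℂ) from by push_cast; ring,
      ← Complex.ofReal_mul, mul_div_cancel₀ _ hd2]
    push_cast
    ring
  have E4 := key η hloc ht s hre'
  have E5 := key η hloc ht w2 (by rw [hw2re]; intro h; exact hre' (by linarith))
  rw [hw2im] at E5
  have hneg : ((w2.re : ℂ) - 1/2) = -(((s.re : ℂ) - 1/2)) := by
    rw [hw2re]; push_cast; ring
  rw [hneg] at E3 E5
  have EL1 := hxw s t ht0
  have EL2 : xw η w2 t = ((t ^ (w2.re - 1/2) : ℝ) : ℂ)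
      * (1 + (starRingEnd ℂ) s * ∫ v in (1:ℝ)..t, (v : ℂ) ^ (-1 - w2) * η v) := by
    rw [hxw w2 t ht0, h1w2]
  have Econj : (starRingEnd ℂ) s = s - 2 * (s.im : ℂ) * Complex.I := by
    have h := Complex.sub_conj s
    push_cast at h
    linear_combination -h
  rw [EL1, EL2]
  linear_combination (-1 : ℂ) * E2 - (1 - s) * E4 - E3 - (starRingEnd ℂ) s * E5
    + (∫ u in (1:ℝ)..t, (u : ℂ) ^ (-(3/2) - Complex.I * (s.im : ℂ)) * η u) * Econj
end

section
/- The difference D(t) = δ_s(t) - δ_{1+iτ}(t) (where τ = Im(s), σ = Re(s)) satisfies D(t) = (σ-1/2)² t^{1/2} ∫_1^t u^{-1} ∫_1^u v^{-3/2} δ_s(v) dv du - (1/4) t^{1/2} ∫_1^t u^{-1} ∫_1^u v^{-3/2} δ_{1+iτ}(v) dv du, with D(1) = 0 and D'(1) = 0. -/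
open MeasureTheory Complex Filter

/-!
Write `ψ_w(t) = t^{Re w} (1 + (1 - w) F_w(t))` with `F_w(t) = ∫_1^t u^{-1-w} η(u) du`.
Integrating `v^{-3/2} ψ_w(v)` by parts against the primitive `F_w` (Fubini on the triangle
`1 < x ≤ u ≤ t`) gives
`(Re w - 1/2) ∫_1^t v^{-3/2} ψ_w = t^{-1/2} ψ_w(t) - 1 - (1 - w) G(t)`,
where `G(t) = ∫_1^t v^{-3/2 - i Im w} η(v) dv` depends on `w` only through `Im w`, as does
`1 - w + conj w`. Applied to `w` and `1 - conj w`, this yields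
`(Re w - 1/2)² t^{1/2} ∫_1^t u^{-1} ∫_1^u v^{-3/2} δ_w = δ_w(t) + E(t)`
with `E` depending only on `Im w`, so `E` cancels in the difference of `w = s` and `w = 1 + i Im s`.
-/

open Set Topology

theorem setIntegral_mul_setIntegral_Ioc_swap {a t : ℝ} {f g : ℝ → ℂ}
    (hf : IntegrableOn f (Ioc a t)) (hg : IntegrableOn g (Ioc a t)) :
    ∫ u in Ioc a t, g u * ∫ x in Ioc a u, f x
      = ∫ x in Ioc a t, (∫ u in Ioc x t, g u) * f x := by
  set μ := volume.restrict (Ioc a t)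
  set k : ℝ → ℝ → ℂ := fun u x =>
    {p : ℝ × ℝ | p.2 ≤ p.1}.indicator (fun p => g p.1 * f p.2) (u, x)
  have hk : Integrable (Function.uncurry k) (μ.prod μ) :=
    (hg.mul_prod hf).indicator (measurableSet_le measurable_snd measurable_fst)
  have inner_x : ∀ u ∈ Ioc a t, g u * ∫ x in Ioc a u, f x = ∫ x, k u x ∂μ := by
    intro u hu
    have hset : Iic u ∩ Ioc a t = Ioc a u := by
      rw [inter_comm, Ioc_inter_Iic, min_eq_right hu.2]
    have : (fun x => k u x) = (Iic u).indicator (fun x => g u * f x) := by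
      ext x; simp [k, indicator_apply]
    rw [this, MeasureTheory.integral_indicator measurableSet_Iic,
      Measure.restrict_restrict measurableSet_Iic, hset, integral_const_mul]
  have inner_u : ∀ x ∈ Ioc a t, ∫ u, k u x ∂μ = (∫ u in Ioc x t, g u) * f x := by
    intro x hx
    have hset : Ici x ∩ Ioc a t = Icc x t := ext fun u =>
      ⟨fun ⟨h1, _, h3⟩ => ⟨h1, h3⟩, fun ⟨h1, h2⟩ => ⟨h1, hx.1.trans_le h1, h2⟩⟩
    have : (fun u => k u x) = (Ici x).indicator (fun u => g u * f x) := by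
      ext u; simp [k, indicator_apply]
    rw [this, MeasureTheory.integral_indicator measurableSet_Ici,
      Measure.restrict_restrict measurableSet_Ici, hset, integral_Icc_eq_integral_Ioc,
      MeasureTheory.integral_mul_const]
  calc ∫ u in Ioc a t, g u * ∫ x in Ioc a u, f x
      = ∫ u, ∫ x, k u x ∂μ ∂μ := setIntegral_congr_fun measurableSet_Ioc inner_x
    _ = ∫ x, ∫ u, k u x ∂μ ∂μ := integral_integral_swap hk
    _ = ∫ x in Ioc a t, (∫ u in Ioc x t, g u) * f x :=
        setIntegral_congr_fun measurableSet_Ioc inner_u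

theorem integral_deriv_mul_primitive_eq_sub {a t : ℝ} (hat : a ≤ t) {f g G : ℝ → ℂ}
    (hf : IntervalIntegrable f volume a t) (hg : IntervalIntegrable g volume a t)
    (hG : ∀ x ∈ Icc a t, HasDerivAt G (g x) x) :
    ∫ u in a..t, g u * (∫ x in a..u, f x)
      = G t * (∫ x in a..t, f x) - ∫ x in a..t, G x * f x := by
  have hGc : ContinuousOn G (Icc a t) := fun x hx => (hG x hx).continuousAt.continuousWithinAt
  have hGf : IntervalIntegrable (fun x => G x * f x) volume a t :=
    (intervalIntegrable_iff_integrableOn_Icc_of_le hat).2 <|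
      ((intervalIntegrable_iff_integrableOn_Icc_of_le hat).1 hf).continuousOn_mul hGc
        isCompact_Icc
  have primitive_g : ∀ x ∈ Ioc a t, ∫ u in Ioc x t, g u = G t - G x := fun x hx => by
    rw [← intervalIntegral.integral_of_le hx.2]
    refine intervalIntegral.integral_eq_sub_of_hasDerivAt (fun u hu => hG u ?_) ?_
    · rw [uIcc_of_le hx.2] at hu; exact ⟨hx.1.le.trans hu.1, hu.2⟩
    · refine hg.mono_set ?_
      rw [uIcc_of_le hx.2, uIcc_of_le hat]
      exact Icc_subset_Icc_left hx.1.le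
  rw [intervalIntegrable_iff_integrableOn_Ioc_of_le hat] at hf hg hGf
  rw [intervalIntegral.integral_of_le hat, intervalIntegral.integral_of_le hat,
    intervalIntegral.integral_of_le hat]
  calc ∫ u in Ioc a t, g u * ∫ x in a..u, f x
      = ∫ u in Ioc a t, g u * ∫ x in Ioc a u, f x :=
        setIntegral_congr_fun measurableSet_Ioc fun u hu => by
          rw [intervalIntegral.integral_of_le hu.1.le]
    _ = ∫ x in Ioc a t, (∫ u in Ioc x t, g u) * f x :=
        setIntegral_mul_setIntegral_Ioc_swap hf hg
    _ = ∫ x in Ioc a t, (G t * f x - G x * f x) :=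
        setIntegral_congr_fun measurableSet_Ioc fun x hx => by rw [primitive_g x hx, sub_mul]
    _ = G t * (∫ x in Ioc a t, f x) - ∫ x in Ioc a t, G x * f x := by
        rw [integral_sub (hf.const_mul _) hGf, MeasureTheory.integral_const_mul]

theorem continuousOn_ofReal_cpow_const_Ioi (z : ℂ) :
    ContinuousOn (fun x : ℝ => (x : ℂ) ^ z) (Ioi 0) := fun x hx =>
  (continuousAt_ofReal_cpow_const x z (Or.inr (ne_of_gt hx))).continuousWithinAt

theorem hasDerivAt_ofReal_cpow_const_of_pos {x : ℝ} (hx : 0 < x) (r : ℂ) :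
    HasDerivAt (fun y : ℝ => (y : ℂ) ^ r) (r * (x : ℂ) ^ (r - 1)) x := by
  simpa using ((hasDerivAt_id (x : ℂ)).cpow_const (ofReal_mem_slitPlane.2 hx)).comp_ofReal

theorem MeasureTheory.LocallyIntegrableOn.continuousOn_primitive_Ici {f : ℝ → ℂ} {a : ℝ}
    (hf : LocallyIntegrableOn f (Ici a)) :
    ContinuousOn (fun t => ∫ u in a..t, f u) (Ici a) := by
  intro x hx
  have hax : a ≤ x + 1 := by linarith [mem_Ici.1 hx]
  have hint : IntervalIntegrable f volume a (x + 1) :=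
    (intervalIntegrable_iff_integrableOn_Icc_of_le hax).2
      (hf.integrableOn_compact_subset Icc_subset_Ici_self isCompact_Icc)
  have hnhds : Icc a (x + 1) ∈ 𝓝[Ici a] x := by
    rw [← Ici_inter_Iic]
    exact inter_mem_nhdsWithin _ (Iic_mem_nhds (by linarith))
  have hcont := intervalIntegral.continuousOn_primitive_interval' hint left_mem_uIcc
  rw [uIcc_of_le hax] at hcont
  exact (hcont x ⟨hx, by linarith⟩).mono_of_mem_nhdsWithin hnhds

section

variable {η : ℝ → ℂ}

theorem MeasureTheory.LocallyIntegrableOn.cpow_mul {a : ℝ} (hη : LocallyIntegrableOn η (Ici a))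
    (ha : 0 < a) (z : ℂ) : LocallyIntegrableOn (fun x : ℝ => (x : ℂ) ^ z * η x) (Ici a) :=
  hη.continuousOn_mul ((continuousOn_ofReal_cpow_const_Ioi z).mono (Ici_subset_Ioi.2 ha))
    isClosed_Ici.isLocallyClosed

theorem continuousOn_psi (hη : LocallyIntegrableOn η (Ici 1)) (w : ℂ) :
    ContinuousOn (psi η w) (Ici 1) := by
  refine ContinuousOn.mul ?_ (continuousOn_const.add (continuousOn_const.mul
    (hη.cpow_mul one_pos _).continuousOn_primitive_Ici))
  exact continuous_ofReal.comp_continuousOn <|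
    (continuousOn_id.rpow_const fun x hx => Or.inl (ne_of_gt (zero_lt_one.trans_le hx)))

theorem sub_half_mul_integral_psi (hη : LocallyIntegrableOn η (Ici 1)) (w : ℂ) {t : ℝ}
    (ht : 1 ≤ t) :
    ((w.re : ℂ) - 1/2) * ∫ v in (1:ℝ)..t, (v : ℂ) ^ (-(3/2) : ℂ) * psi η w v
      = (t : ℂ) ^ (-(1/2) : ℂ) * psi η w t - 1
        - (1 - w) * ∫ v in (1:ℝ)..t, (v : ℂ) ^ (-(3/2) - w.im * I) * η v := by
  set r : ℂ := (w.re : ℂ) - 1/2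
  set F : ℝ → ℂ := fun v => ∫ x in (1:ℝ)..v, (x : ℂ) ^ (-1 - w) * η x
  set g : ℝ → ℂ := fun v => r * (v : ℂ) ^ (r - 1)
  have hpos : ∀ v ∈ Icc (1:ℝ) t, 0 < v := fun v hv => zero_lt_one.trans_le hv.1
  have hIcc : Icc (1:ℝ) t ⊆ Ici 1 := Icc_subset_Ici_self
  have hpow : ∀ v ∈ Icc (1:ℝ) t, ∀ z : ℂ,
      (v : ℂ) ^ z * ((v ^ w.re : ℝ) : ℂ) = (v : ℂ) ^ (z + w.re) := fun v hv z => by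
    rw [ofReal_cpow (hpos v hv).le, cpow_add _ _ (ofReal_ne_zero.2 (hpos v hv).ne')]
  have hG : ∀ v ∈ Icc (1:ℝ) t, HasDerivAt (fun x : ℝ => (x : ℂ) ^ r) (g v) v :=
    fun v hv => hasDerivAt_ofReal_cpow_const_of_pos (hpos v hv) r
  have hg : IntervalIntegrable g volume 1 t :=
    (continuousOn_const.mul ((continuousOn_ofReal_cpow_const_Ioi _).mono
      fun v hv => hpos v hv)).intervalIntegrable_of_Icc ht
  have hf : IntervalIntegrable (fun x : ℝ => (x : ℂ) ^ (-1 - w) * η x) volume 1 t :=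
    (intervalIntegrable_iff_integrableOn_Icc_of_le ht).2
      ((hη.cpow_mul one_pos _).integrableOn_compact_subset hIcc isCompact_Icc)
  have hgF : IntervalIntegrable (fun v => g v * F v) volume 1 t :=
    (hg.mul_continuousOn ((hη.cpow_mul one_pos _).continuousOn_primitive_Ici.mono
      (by rw [uIcc_of_le ht]; exact hIcc)))
  have integrand : ∀ v ∈ uIcc (1:ℝ) t,
      r * ((v : ℂ) ^ (-(3/2) : ℂ) * psi η w v) = g v + (1 - w) * (g v * F v) := fun v hv => by
    rw [uIcc_of_le ht] at hv
    simp only [g, F, psi]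
    rw [show r - 1 = -(3/2) + (w.re : ℂ) by ring, ← hpow v hv]
    ring
  have shifted : ∀ x ∈ uIcc (1:ℝ) t,
      (x : ℂ) ^ r * ((x : ℂ) ^ (-1 - w) * η x) = (x : ℂ) ^ (-(3/2) - w.im * I) * η x :=
    fun x hx => by
      rw [uIcc_of_le ht] at hx
      rw [← mul_assoc, ← cpow_add _ _ (ofReal_ne_zero.2 (hpos x hx).ne')]
      congr 2
      linear_combination re_add_im w
  have int_g : ∫ v in (1:ℝ)..t, g v = (t : ℂ) ^ r - 1 := by
    rw [intervalIntegral.integral_eq_sub_of_hasDerivAt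
      (fun v hv => hG v (by rwa [← uIcc_of_le ht])) hg]
    simp
  rw [← intervalIntegral.integral_const_mul, intervalIntegral.integral_congr integrand,
    intervalIntegral.integral_add hg (hgF.const_mul _), int_g, intervalIntegral.integral_const_mul,
    integral_deriv_mul_primitive_eq_sub ht hf hg hG,
    intervalIntegral.integral_congr shifted, psi, ← mul_assoc, hpow t ⟨ht, le_rfl⟩,
    show -(1/2) + (w.re : ℂ) = r by ring]
  ring

theorem re_one_sub_conj (w : ℂ) : (1 - (starRingEnd ℂ) w).re = 1 - w.re := by simp

theorem im_one_sub_conj (w : ℂ) : (1 - (starRingEnd ℂ) w).im = w.im := by simp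

theorem conj_eq_two_re_sub (w : ℂ) : (starRingEnd ℂ) w = 2 * (w.re : ℂ) - w := by
  linear_combination (by exact_mod_cast add_conj w : w + (starRingEnd ℂ) w = 2 * (w.re : ℂ))

theorem integral_psi_add_integral_psi_reflect (hη : LocallyIntegrableOn η (Ici 1)) {w : ℂ}
    (hw : w.re ≠ 1/2) {t : ℝ} (ht : 1 ≤ t) :
    (∫ v in (1:ℝ)..t, (v : ℂ) ^ (-(3/2) : ℂ) * psi η w v)
      + ∫ v in (1:ℝ)..t, (v : ℂ) ^ (-(3/2) : ℂ) * psi η (1 - (starRingEnd ℂ) w) v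
      = 2 * ((t : ℂ) ^ (-(1/2) : ℂ) * delta η w t
        + ∫ v in (1:ℝ)..t, (v : ℂ) ^ (-(3/2) - w.im * I) * η v) := by
  have hA := sub_half_mul_integral_psi hη w ht
  have hB := sub_half_mul_integral_psi hη (1 - (starRingEnd ℂ) w) ht
  rw [re_one_sub_conj, im_one_sub_conj] at hB
  have hc : ((2 * w.re - 1 : ℝ) : ℂ) * ((2 * w.re - 1 : ℝ) : ℂ)⁻¹ = 1 :=
    mul_inv_cancel₀ (ofReal_ne_zero.2 fun h => hw (by linarith))
  rw [delta]
  push_cast at hB hc ⊢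
  rw [conj_eq_two_re_sub] at hB ⊢
  linear_combination (2 * (∫ v in (1:ℝ)..t, (v : ℂ) ^ (-(3/2) - w.im * I) * η v)
    - (∫ v in (1:ℝ)..t, (v : ℂ) ^ (-(3/2) : ℂ) * psi η w v)
    - ∫ v in (1:ℝ)..t, (v : ℂ) ^ (-(3/2) : ℂ) * psi η (1 - (2 * (w.re : ℂ) - w)) v)
      * hc
    + 2 * (2 * (w.re : ℂ) - 1)⁻¹ * (hA - hB)

theorem continuousOn_delta (hη : LocallyIntegrableOn η (Ici 1)) (w : ℂ) :
    ContinuousOn (delta η w) (Ici 1) :=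
  continuousOn_const.mul ((continuousOn_psi hη w).sub (continuousOn_psi hη _))

theorem intervalIntegrable_cpow_mul_psi (hη : LocallyIntegrableOn η (Ici 1)) (z w : ℂ) {t : ℝ}
    (ht : 1 ≤ t) : IntervalIntegrable (fun v : ℝ => (v : ℂ) ^ z * psi η w v) volume 1 t :=
  (((continuousOn_ofReal_cpow_const_Ioi z).mono (Ici_subset_Ioi.2 one_pos)).mul
    (continuousOn_psi hη w) |>.mono Icc_subset_Ici_self).intervalIntegrable_of_Icc ht

theorem integral_cpow_mul_delta (hη : LocallyIntegrableOn η (Ici 1)) (z w : ℂ) {t : ℝ}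
    (ht : 1 ≤ t) :
    ∫ v in (1:ℝ)..t, (v : ℂ) ^ z * delta η w v
      = ((2 * w.re - 1 : ℝ) : ℂ)⁻¹ * ((∫ v in (1:ℝ)..t, (v : ℂ) ^ z * psi η w v)
        - ∫ v in (1:ℝ)..t, (v : ℂ) ^ z * psi η (1 - (starRingEnd ℂ) w) v) := by
  rw [← intervalIntegral.integral_sub (intervalIntegrable_cpow_mul_psi hη z w ht)
    (intervalIntegrable_cpow_mul_psi hη z _ ht), ← intervalIntegral.integral_const_mul]
  congr 1 with v
  rw [delta]
  ring

theorem sq_sub_half_mul_integral_delta (hη : LocallyIntegrableOn η (Ici 1)) {w : ℂ}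
    (hw : w.re ≠ 1/2) {t : ℝ} (ht : 1 ≤ t) :
    ((w.re : ℂ) - 1/2) ^ 2 * ∫ v in (1:ℝ)..t, (v : ℂ) ^ (-(3/2) : ℂ) * delta η w v
      = 1/2 * ((t : ℂ) ^ (-(1/2) : ℂ) * (psi η w t + psi η (1 - (starRingEnd ℂ) w) t)) - 1
        - (1/2 - w.im * I) * ∫ v in (1:ℝ)..t, (v : ℂ) ^ (-(3/2) - w.im * I) * η v := by
  have hA := sub_half_mul_integral_psi hη w ht
  have hB := sub_half_mul_integral_psi hη (1 - (starRingEnd ℂ) w) ht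
  rw [re_one_sub_conj, im_one_sub_conj] at hB
  have hc : ((2 * w.re - 1 : ℝ) : ℂ) * ((2 * w.re - 1 : ℝ) : ℂ)⁻¹ = 1 :=
    mul_inv_cancel₀ (ofReal_ne_zero.2 fun h => hw (by linarith))
  rw [integral_cpow_mul_delta hη _ w ht]
  push_cast at hB hc ⊢
  rw [conj_eq_two_re_sub] at hB ⊢
  linear_combination (1/2 : ℂ) * (hA + hB)
    - (∫ v in (1:ℝ)..t, (v : ℂ) ^ (-(3/2) - w.im * I) * η v) * re_add_im w
    + (2 * (w.re : ℂ) - 1) / 4 * ((∫ v in (1:ℝ)..t, (v : ℂ) ^ (-(3/2) : ℂ) * psi η w v)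
      - ∫ v in (1:ℝ)..t, (v : ℂ) ^ (-(3/2) : ℂ) * psi η (1 - (2 * (w.re : ℂ) - w)) v)
      * hc

theorem continuousOn_ofReal_inv_Ici_one : ContinuousOn (fun u : ℝ => (u : ℂ)⁻¹) (Ici 1) :=
  continuous_ofReal.continuousOn.inv₀ fun _ hu => ofReal_ne_zero.2 (zero_lt_one.trans_le hu).ne'

theorem inv_mul_cpow_neg_half {u : ℝ} (hu : 0 < u) :
    (u : ℂ)⁻¹ * (u : ℂ) ^ (-(1/2) : ℂ) = (u : ℂ) ^ (-(3/2) : ℂ) := by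
  rw [← cpow_neg_one, ← cpow_add _ _ (ofReal_ne_zero.2 hu.ne')]
  norm_num

theorem ofReal_rpow_half_mul_cpow_neg_half {t : ℝ} (ht : 0 < t) :
    ((t ^ ((1:ℝ)/2) : ℝ) : ℂ) * (t : ℂ) ^ (-(1/2) : ℂ) = 1 := by
  rw [ofReal_cpow ht.le, ← cpow_add _ _ (ofReal_ne_zero.2 ht.ne')]
  norm_num

theorem sq_sub_half_mul_integral_inv_mul_integral_delta (hη : LocallyIntegrableOn η (Ici 1))
    {w : ℂ} (hw : w.re ≠ 1/2) {t : ℝ} (ht : 1 ≤ t) :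
    ((w.re : ℂ) - 1/2) ^ 2 * ∫ u in (1:ℝ)..t, (u : ℂ)⁻¹ *
        ∫ v in (1:ℝ)..u, (v : ℂ) ^ (-(3/2) : ℂ) * delta η w v
      = (t : ℂ) ^ (-(1/2) : ℂ) * delta η w t
        + (∫ v in (1:ℝ)..t, (v : ℂ) ^ (-(3/2) - w.im * I) * η v)
        - ∫ u in (1:ℝ)..t, (u : ℂ)⁻¹ *
          (1 + (1/2 - w.im * I) * ∫ v in (1:ℝ)..u, (v : ℂ) ^ (-(3/2) - w.im * I) * η v) := by
  have integrand : ∀ u ∈ uIcc (1:ℝ) t,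
      ((w.re : ℂ) - 1/2) ^ 2 * ((u : ℂ)⁻¹ *
        ∫ v in (1:ℝ)..u, (v : ℂ) ^ (-(3/2) : ℂ) * delta η w v)
      = 1/2 * ((u : ℂ) ^ (-(3/2) : ℂ) * psi η w u
          + (u : ℂ) ^ (-(3/2) : ℂ) * psi η (1 - (starRingEnd ℂ) w) u)
        - (u : ℂ)⁻¹ *
          (1 + (1/2 - w.im * I) * ∫ v in (1:ℝ)..u, (v : ℂ) ^ (-(3/2) - w.im * I) * η v) := by
    intro u hu
    rw [uIcc_of_le ht] at hu
    have hu0 : 0 < u := zero_lt_one.trans_le hu.1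
    rw [mul_left_comm, sq_sub_half_mul_integral_delta hη hw hu.1, ← inv_mul_cpow_neg_half hu0]
    ring
  have hψ : IntervalIntegrable (fun u : ℝ => 1/2 * ((u : ℂ) ^ (-(3/2) : ℂ) * psi η w u
      + (u : ℂ) ^ (-(3/2) : ℂ) * psi η (1 - (starRingEnd ℂ) w) u)) volume 1 t :=
    ((intervalIntegrable_cpow_mul_psi hη _ _ ht).add
      (intervalIntegrable_cpow_mul_psi hη _ _ ht)).const_mul _
  have hG : IntervalIntegrable (fun u : ℝ => (u : ℂ)⁻¹ *
      (1 + (1/2 - w.im * I) * ∫ v in (1:ℝ)..u, (v : ℂ) ^ (-(3/2) - w.im * I) * η v))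
      volume 1 t :=
    (continuousOn_ofReal_inv_Ici_one.mul (continuousOn_const.add (continuousOn_const.mul
      (hη.cpow_mul one_pos _).continuousOn_primitive_Ici)) |>.mono Icc_subset_Ici_self)
      |>.intervalIntegrable_of_Icc ht
  rw [← intervalIntegral.integral_const_mul, intervalIntegral.integral_congr integrand,
    intervalIntegral.integral_sub hψ hG, intervalIntegral.integral_const_mul,
    intervalIntegral.integral_add (intervalIntegrable_cpow_mul_psi hη _ _ ht)
      (intervalIntegrable_cpow_mul_psi hη _ _ ht),
    integral_psi_add_integral_psi_reflect hη hw ht]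
  ring

theorem delta_sub_delta_eq_of_im_eq (hη : LocallyIntegrableOn η (Ici 1)) {w w' : ℂ}
    (hw : w.re ≠ 1/2) (hw' : w'.re ≠ 1/2) (him : w.im = w'.im) {t : ℝ} (ht : 1 ≤ t) :
    delta η w t - delta η w' t
      = ((w.re : ℂ) - 1/2) ^ 2 * ((t ^ ((1:ℝ)/2) : ℝ) : ℂ) *
          (∫ u in (1:ℝ)..t, (u : ℂ)⁻¹ *
            ∫ v in (1:ℝ)..u, (v : ℂ) ^ (-(3/2) : ℂ) * delta η w v)
        - ((w'.re : ℂ) - 1/2) ^ 2 * ((t ^ ((1:ℝ)/2) : ℝ) : ℂ) *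
          (∫ u in (1:ℝ)..t, (u : ℂ)⁻¹ *
            ∫ v in (1:ℝ)..u, (v : ℂ) ^ (-(3/2) : ℂ) * delta η w' v) := by
  rw [mul_right_comm, sq_sub_half_mul_integral_inv_mul_integral_delta hη hw ht, mul_right_comm,
    sq_sub_half_mul_integral_inv_mul_integral_delta hη hw' ht, him]
  linear_combination (delta η w' t - delta η w t) *
    ofReal_rpow_half_mul_cpow_neg_half (zero_lt_one.trans_le ht)

theorem hasDerivWithinAt_integral_inv_mul_integral_delta (hη : LocallyIntegrableOn η (Ici 1))
    (w : ℂ) :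
    HasDerivWithinAt (fun t => ∫ u in (1:ℝ)..t, (u : ℂ)⁻¹ *
      ∫ v in (1:ℝ)..u, (v : ℂ) ^ (-(3/2) : ℂ) * delta η w v) 0 (Ici 1) 1 := by
  have hδ : ContinuousOn (fun v : ℝ => (v : ℂ) ^ (-(3/2) : ℂ) * delta η w v) (Ici 1) :=
    ((continuousOn_ofReal_cpow_const_Ioi _).mono (Ici_subset_Ioi.2 one_pos)).mul
      (continuousOn_delta hη w)
  have hf := continuousOn_ofReal_inv_Ici_one.mul
    (hδ.locallyIntegrableOn measurableSet_Ici).continuousOn_primitive_Ici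
  simpa using intervalIntegral.integral_hasDerivWithinAt_right
    ((hf.mono Icc_subset_Ici_self).intervalIntegrable_of_Icc le_rfl)
    ((hf.mono Ioi_subset_Ici_self).stronglyMeasurableAtFilter_nhdsWithin measurableSet_Ioi 1)
    ((hf 1 (mem_Ici.2 le_rfl)).mono Ioi_subset_Ici_self)

end

theorem stmt10_general (η : ℝ → ℂ) (s : ℂ) (D : ℝ → ℂ)
    (hloc : LocallyIntegrableOn η (Set.Ici 1))
    (hre' : s.re ≠ 1/2)
    (hD : ∀ t : ℝ, D t = delta η s t - delta η (1 + Complex.I * s.im) t) :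
    (∀ t : ℝ, 1 ≤ t →
      D t = ((s.re : ℂ) - 1/2) ^ 2 * ((t ^ ((1:ℝ)/2) : ℝ) : ℂ) *
            (∫ u in (1:ℝ)..t, (u : ℂ)⁻¹ *
              ∫ v in (1:ℝ)..u, (v : ℂ) ^ (-(3/2) : ℂ) * delta η s v)
          - (1/4) * ((t ^ ((1:ℝ)/2) : ℝ) : ℂ) *
            (∫ u in (1:ℝ)..t, (u : ℂ)⁻¹ *
              ∫ v in (1:ℝ)..u, (v : ℂ) ^ (-(3/2) : ℂ) *
                delta η (1 + Complex.I * s.im) v)) ∧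
    D 1 = 0 ∧ HasDerivWithinAt D 0 (Set.Ici 1) 1 := by
  have hre : (1 + I * s.im).re ≠ 1/2 := by norm_num
  have identity (t : ℝ) (ht : 1 ≤ t) :=
    (hD t).trans (delta_sub_delta_eq_of_im_eq hloc hre' hre (by simp) ht)
  refine ⟨fun t ht => by rw [identity t ht]; norm_num, by simpa using identity 1 le_rfl, ?_⟩
  have hT := (Real.hasDerivAt_rpow_const (x := 1) (p := (1:ℝ)/2)
    (Or.inl one_ne_zero)).ofReal_comp.hasDerivWithinAt (s := Ici 1)
  have hK := hasDerivWithinAt_integral_inv_mul_integral_delta hloc s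
  have hK' := hasDerivWithinAt_integral_inv_mul_integral_delta hloc (1 + I * s.im)
  exact ((((hT.const_mul _).mul hK).sub ((hT.const_mul _).mul hK')).congr_deriv (by simp)).congr
    identity (identity 1 le_rfl)

/-- the difference D(t) = δ_s(t) - δ_{1+iτ}(t) satisfies the stated
double-integral identity, with D(1) = 0 and D'(1) = 0. -/
theorem stmt10 (η : ℝ → ℂ) (s : ℂ) (c : ℝ) (D : ℝ → ℂ)
    (hc : ∀ t : ℝ, 1 ≤ t → ‖η t‖ ≤ c)
    (hloc : LocallyIntegrableOn η (Set.Ici 1))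
    (hre : s.re ∈ Set.Icc (0:ℝ) 1) (hre' : s.re ≠ 1/2) (him : s.im ≠ 0)
    (hD : ∀ t : ℝ, D t = delta η s t - delta η (1 + Complex.I * s.im) t) :
    (∀ t : ℝ, 1 ≤ t →
      D t = ((s.re : ℂ) - 1/2) ^ 2 * ((t ^ ((1:ℝ)/2) : ℝ) : ℂ) *
            (∫ u in (1:ℝ)..t, (u : ℂ)⁻¹ *
              ∫ v in (1:ℝ)..u, (v : ℂ) ^ (-(3/2) : ℂ) * delta η s v)
          - (1/4) * ((t ^ ((1:ℝ)/2) : ℝ) : ℂ) *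
            (∫ u in (1:ℝ)..t, (u : ℂ)⁻¹ *
              ∫ v in (1:ℝ)..u, (v : ℂ) ^ (-(3/2) : ℂ) *
                delta η (1 + Complex.I * s.im) v)) ∧
    D 1 = 0 ∧ HasDerivWithinAt D 0 (Set.Ici 1) 1 :=
  stmt10_general η s D hloc hre' hD
end

section
/- Suppose η satisfies the rotation number hypothesis with rotation number ρ ≠ 0 and is bounded. Then for each τ ≠ 0 there exists M > 0 such that |δ_{1+iτ}(t) + t μ_η(1+iτ)| < M for all t > 1, where μ_η(w) = -1 - (1-w) ∫_1^∞ u^{-1-w} η(u) du, evaluated at w = 1+iτ, so that μ_η(1+iτ) = -1 + iτ ∫_1^∞ u^{-2-iτ} η(u) du. In other words, δ_{1+iτ}(t) = -t μ_η(1+iτ) + O(1) as t → ∞. -/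
open MeasureTheory Complex Filter

open Set
open scoped Interval

lemma cpow_contOn (a : ℂ) : ContinuousOn (fun u : ℝ => (u:ℂ) ^ a) {u : ℝ | 0 < u} := by
  intro u hu
  refine ContinuousAt.continuousWithinAt ?_
  exact (continuousAt_cpow_const (Or.inl (by simpa using hu))).comp
    Complex.continuous_ofReal.continuousAt

lemma cpow_norm {a : ℂ} {u : ℝ} (hu : 0 < u) : ‖(u:ℂ) ^ a‖ = u ^ a.re := by
  rw [norm_cpow_eq_rpow_re_of_pos hu]

lemma intOn_of_bound {E : Type*} [NormedAddCommGroup E] {s : Set ℝ} (hs : MeasurableSet s) (hμ : volume s < ⊤) {F : ℝ → E}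
    (hm : AEStronglyMeasurable F (volume.restrict s)) {b : ℝ} (hb : ∀ x ∈ s, ‖F x‖ ≤ b) :
    IntegrableOn F s := by
  refine Integrable.mono' (g := fun _ => b) ?_ hm ?_
  · exact integrableOn_const hμ.ne
  · exact (ae_restrict_iff' hs).2 (ae_of_all _ hb)

lemma fubini_triangle {t : ℝ} {f g : ℝ → ℂ}
    (hf : IntegrableOn f (Set.Ioc 1 t))
    (hg : IntegrableOn g (Set.Ioc 1 t)) :
    ∫ u in Set.Ioc 1 t, f u * ∫ v in Set.Ioc u t, g v
      = ∫ v in Set.Ioc 1 t, (∫ u in Set.Ioc 1 v, f u) * g v := by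
  set μ1 := volume.restrict (Set.Ioc (1:ℝ) t) with hμ1
  set F : ℝ × ℝ → ℂ := Set.indicator {p : ℝ × ℝ | p.1 ≤ p.2} (fun p => f p.1 * g p.2) with hF
  have hmeas : MeasurableSet {p : ℝ × ℝ | p.1 ≤ p.2} :=
    measurableSet_le measurable_fst measurable_snd
  have hFint : Integrable F (μ1.prod μ1) := (hf.mul_prod hg).indicator hmeas
  have hswap := MeasureTheory.integral_integral_swap (f := fun u v => F (u, v))
    (μ := μ1) (ν := μ1) hFint
  have h1 : ∫ u, (∫ v, F (u, v) ∂μ1) ∂μ1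
      = ∫ u in Set.Ioc 1 t, f u * ∫ v in Set.Ioc u t, g v := by
    apply setIntegral_congr_fun measurableSet_Ioc
    intro u hu
    simp only
    have : (fun v => F (u, v)) = Set.indicator (Set.Ici u) (fun v => f u * g v) := by
      funext v
      simp only [hF, Set.indicator, Set.mem_setOf_eq, Set.mem_Ici]
    rw [this, setIntegral_indicator measurableSet_Ici]
    have hset : Set.Ioc (1:ℝ) t ∩ Set.Ici u = Set.Icc u t := by
      ext v; constructor
      · rintro ⟨⟨_, h2⟩, h3⟩; exact ⟨h3, h2⟩
      · rintro ⟨h1', h2⟩; exact ⟨⟨lt_of_lt_of_le hu.1 h1', h2⟩, h1'⟩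
    rw [hset, integral_Icc_eq_integral_Ioc, integral_const_mul]
  have h2 : ∫ v, (∫ u, F (u, v) ∂μ1) ∂μ1
      = ∫ v in Set.Ioc 1 t, (∫ u in Set.Ioc 1 v, f u) * g v := by
    apply setIntegral_congr_fun measurableSet_Ioc
    intro v hv
    simp only
    have : (fun u => F (u, v)) = Set.indicator (Set.Iic v) (fun u => f u * g v) := by
      funext u
      simp only [hF, Set.indicator, Set.mem_setOf_eq, Set.mem_Iic]
    rw [this, setIntegral_indicator measurableSet_Iic]
    have hset : Set.Ioc (1:ℝ) t ∩ Set.Iic v = Set.Ioc 1 v := by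
      ext u; constructor
      · rintro ⟨⟨h1', _⟩, h3⟩; exact ⟨h1', h3⟩
      · rintro ⟨h1', h2⟩; exact ⟨⟨h1', le_trans h2 hv.2⟩, h2⟩
    rw [hset, integral_mul_const]
  rw [← h1, ← h2, hswap]

lemma Bkey {η : ℝ → ℂ} {τ c C : ℝ} {ρ : ℂ} (hτ : τ ≠ 0)
    (hc : ∀ t : ℝ, 1 ≤ t → ‖η t‖ ≤ c)
    (hloc : LocallyIntegrableOn η (Set.Ici 1))
    (hrot : ∀ t : ℝ, 1 ≤ t → ‖∫ u in (1:ℝ)..t, (η u - ρ)‖ ≤ C)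
    {t : ℝ} (ht : 1 < t) :
    ‖∫ u in Set.Ioc 1 t, (u:ℂ) ^ (-1 - Complex.I * τ) * (η u - ρ)‖
      ≤ C + ‖1 + Complex.I * τ‖ * C := by
  set a : ℂ := -1 - Complex.I * τ with ha_def
  have hC0 : 0 ≤ C := by simpa using hrot 1 le_rfl
  have hE : ∀ v : ℝ, 1 ≤ v → ‖∫ u in Set.Ioc 1 v, (η u - ρ)‖ ≤ C := by
    intro v hv
    have := hrot v hv
    rwa [intervalIntegral.integral_of_le hv] at this
  have ha_re : a.re = -1 := by simp [ha_def]
  have ha_ne : a ≠ 0 := by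
    intro h
    rw [h] at ha_re; simp at ha_re
  -- integrability of f := η - ρ on Ioc 1 t
  have hη : IntegrableOn η (Set.Ioc 1 t) :=
    (hloc.integrableOn_compact_subset (Set.Icc_subset_Ici_self) isCompact_Icc).mono_set
      Set.Ioc_subset_Icc_self
  have hf : IntegrableOn (fun u => η u - ρ) (Set.Ioc 1 t) :=
    hη.sub (integrableOn_const measure_Ioc_lt_top.ne)
  set g : ℝ → ℂ := fun v => (v:ℂ) ^ (-2 - Complex.I * τ) with hg_def
  have hIocsub : Set.Ioc (1:ℝ) t ⊆ {u : ℝ | 0 < u} := fun u hu => lt_trans one_pos hu.1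
  have hg_m : AEStronglyMeasurable g (volume.restrict (Set.Ioc 1 t)) :=
    ((cpow_contOn _).mono hIocsub).aestronglyMeasurable measurableSet_Ioc
  have hg_re : (-2 - Complex.I * (τ:ℂ)).re = -2 := by simp
  have hg_norm : ∀ v : ℝ, 0 < v → ‖g v‖ = v ^ (-2:ℝ) := by
    intro v hv; rw [hg_def]; simp only; rw [cpow_norm hv, hg_re]
  have hg : IntegrableOn g (Set.Ioc 1 t) := by
    refine intOn_of_bound measurableSet_Ioc measure_Ioc_lt_top hg_m (b := 1) ?_
    intro v hv
    rw [hg_norm v (hIocsub hv)]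
    exact Real.rpow_le_one_of_one_le_of_nonpos (le_of_lt hv.1) (by norm_num)
  -- the inner integral formula
  have hginner : ∀ u : ℝ, u ∈ Set.Ioc (1:ℝ) t →
      ∫ v in Set.Ioc u t, g v = ((t:ℂ) ^ a - (u:ℂ) ^ a) / a := by
    intro u hu
    rw [← intervalIntegral.integral_of_le hu.2, hg_def]
    have h0 : (0:ℝ) ∉ Set.uIcc u t := by
      rw [Set.uIcc_of_le hu.2]
      intro h
      exact absurd h.1 (by linarith [hu.1])
    have hne : (-2 - Complex.I * (τ:ℂ)) ≠ -1 := by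
      intro h
      have := congrArg Complex.re h
      simp at this
    rw [integral_cpow (Or.inr ⟨hne, h0⟩)]
    have h1 : -2 - Complex.I * (τ:ℂ) + 1 = a := by rw [ha_def]; ring
    rw [h1]
  -- pointwise identity
  have hpt : ∀ u : ℝ, u ∈ Set.Ioc (1:ℝ) t →
      (u:ℂ) ^ a * (η u - ρ)
        = (t:ℂ) ^ a * (η u - ρ)
          + (1 + Complex.I * τ) * ((η u - ρ) * ∫ v in Set.Ioc u t, g v) := by
    intro u hu
    rw [hginner u hu]
    have hma : (1 : ℂ) + Complex.I * τ = -a := by rw [ha_def]; ring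
    rw [hma]
    field_simp
    ring
  -- integrability of the pieces
  have i0 : IntegrableOn (fun u : ℝ => (u:ℂ) ^ a * (η u - ρ)) (Set.Ioc 1 t) := by
    refine intOn_of_bound measurableSet_Ioc measure_Ioc_lt_top ?_ (b := 1 * (c + ‖ρ‖)) ?_
    · exact (((cpow_contOn a).mono hIocsub).aestronglyMeasurable measurableSet_Ioc).mul
        (hf.aestronglyMeasurable)
    · intro u hu
      rw [norm_mul]
      refine mul_le_mul ?_ ?_ (norm_nonneg _) one_pos.le
      · rw [cpow_norm (hIocsub hu), ha_re]
        exact Real.rpow_le_one_of_one_le_of_nonpos (le_of_lt hu.1) (by norm_num)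
      · exact le_trans (norm_sub_le _ _) (add_le_add (hc u (le_of_lt hu.1)) le_rfl)
  have i1 : IntegrableOn (fun u => (t:ℂ) ^ a * (η u - ρ)) (Set.Ioc 1 t) := hf.const_mul _
  have i2 : IntegrableOn
      (fun u => (1 + Complex.I * τ) * ((η u - ρ) * ∫ v in Set.Ioc u t, g v)) (Set.Ioc 1 t) := by
    refine IntegrableOn.congr_fun (i0.sub i1) ?_ measurableSet_Ioc
    intro u hu
    simp only [Pi.sub_apply]
    have := hpt u hu
    linear_combination this
  -- rewrite the integral
  have hsplit : ∫ u in Set.Ioc 1 t, (u:ℂ) ^ a * (η u - ρ)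
      = (t:ℂ) ^ a * (∫ u in Set.Ioc 1 t, (η u - ρ))
        + (1 + Complex.I * τ)
          * ∫ u in Set.Ioc 1 t, (η u - ρ) * ∫ v in Set.Ioc u t, g v := by
    rw [setIntegral_congr_fun measurableSet_Ioc hpt, integral_add i1 i2,
      integral_const_mul, integral_const_mul]
  rw [hsplit]
  -- fubini
  have hfub : ∫ u in Set.Ioc 1 t, (η u - ρ) * ∫ v in Set.Ioc u t, g v
      = ∫ v in Set.Ioc 1 t, (∫ u in Set.Ioc 1 v, (η u - ρ)) * g v :=
    fubini_triangle hf hg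
  rw [hfub]
  -- now bound
  have hb1 : ‖(t:ℂ) ^ a * (∫ u in Set.Ioc 1 t, (η u - ρ))‖ ≤ C := by
    rw [norm_mul]
    calc ‖(t:ℂ) ^ a‖ * ‖∫ u in Set.Ioc 1 t, (η u - ρ)‖
        ≤ 1 * C := by
          refine mul_le_mul ?_ (hE t (le_of_lt ht)) (norm_nonneg _) one_pos.le
          rw [cpow_norm (lt_trans one_pos ht), ha_re]
          exact Real.rpow_le_one_of_one_le_of_nonpos (le_of_lt ht) (by norm_num)
      _ = C := one_mul C
  have hb2 : ‖∫ v in Set.Ioc 1 t, (∫ u in Set.Ioc 1 v, (η u - ρ)) * g v‖ ≤ C := by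
    have hCg : IntegrableOn (fun v : ℝ => C * v ^ (-2:ℝ)) (Set.Ioc 1 t) := by
      refine intOn_of_bound measurableSet_Ioc measure_Ioc_lt_top ?_ (b := |C|) ?_
      · refine ContinuousOn.aestronglyMeasurable ?_ measurableSet_Ioc
        refine (continuousOn_const.mul ?_).mono hIocsub
        intro v hv
        exact (Real.continuousAt_rpow_const v _ (Or.inl (ne_of_gt hv))).continuousWithinAt
      · intro v hv
        have h1 : (0:ℝ) ≤ v ^ (-2:ℝ) := Real.rpow_nonneg (le_of_lt (hIocsub hv)) _
        rw [Real.norm_eq_abs, abs_mul, _root_.abs_of_nonneg h1]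
        calc |C| * v ^ (-2:ℝ) ≤ |C| * 1 := by
              refine mul_le_mul_of_nonneg_left ?_ (abs_nonneg C)
              exact Real.rpow_le_one_of_one_le_of_nonpos (le_of_lt hv.1) (by norm_num)
          _ = |C| := mul_one _
    refine le_trans (norm_integral_le_of_norm_le hCg ?_) ?_
    · refine (ae_restrict_iff' measurableSet_Ioc).2 (ae_of_all _ ?_)
      intro v hv
      rw [norm_mul, hg_norm v (hIocsub hv)]
      exact mul_le_mul_of_nonneg_right (hE v (le_of_lt hv.1))
        (Real.rpow_nonneg (le_of_lt (hIocsub hv)) _)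
    · rw [integral_const_mul, ← intervalIntegral.integral_of_le (le_of_lt ht),
        integral_rpow (Or.inr ⟨by norm_num, by
          rw [Set.uIcc_of_le (le_of_lt ht)]; intro h; linarith [h.1]⟩)]
      have hrw : ((-2:ℝ) + 1) = -1 := by norm_num
      rw [hrw]
      have ht0 : (0:ℝ) < t := lt_trans one_pos ht
      have h1 : t ^ (-1:ℝ) = t⁻¹ := by
        rw [Real.rpow_neg_one]
      rw [h1]
      have : (t⁻¹ - 1 ^ (-1:ℝ)) / (-1) = 1 - t⁻¹ := by
        rw [Real.one_rpow]; ring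
      rw [this]
      nlinarith [inv_pos.2 ht0, hC0]
  calc ‖_ + _‖ ≤ ‖(t:ℂ) ^ a * (∫ u in Set.Ioc 1 t, (η u - ρ))‖
        + ‖(1 + Complex.I * τ) * ∫ v in Set.Ioc 1 t, (∫ u in Set.Ioc 1 v, (η u - ρ)) * g v‖ :=
      norm_add_le _ _
    _ ≤ C + ‖1 + Complex.I * τ‖ * C := by
        refine add_le_add hb1 ?_
        rw [norm_mul]
        exact mul_le_mul_of_nonneg_left hb2 (norm_nonneg _)

set_option maxHeartbeats 2000000 in
/-- δ_{1+iτ}(t) = -t μ_η(1+iτ) + O(1). -/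
theorem stmt14 (η : ℝ → ℂ) (τ : ℝ) (c C : ℝ) (ρ : ℂ) (hτ : τ ≠ 0)
    (hc : ∀ t : ℝ, 1 ≤ t → ‖η t‖ ≤ c)
    (hloc : LocallyIntegrableOn η (Set.Ici 1))
    (hρ : ρ ≠ 0)
    (hrot : ∀ t : ℝ, 1 ≤ t → ‖∫ u in (1:ℝ)..t, (η u - ρ)‖ ≤ C) :
    ∃ M : ℝ, 0 < M ∧ ∀ t : ℝ, 1 < t →
      ‖(psi η (1 + Complex.I * τ) t - psi η (Complex.I * τ) t)
          + (t : ℂ) * mu η (1 + Complex.I * τ)‖ < M := by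
  have hc0 : 0 ≤ c := le_trans (norm_nonneg _) (hc 1 le_rfl)
  have hC0 : 0 ≤ C := by simpa using hrot 1 le_rfl
  have hτ0 : 0 < |τ| := abs_pos.2 hτ
  set a1 : ℂ := -1 - Complex.I * τ with ha1
  set a2 : ℂ := -2 - Complex.I * τ with ha2
  have ha1re : a1.re = -1 := by simp [ha1]
  have ha2re : a2.re = -2 := by simp [ha2]
  set KA : ℝ := C + ‖1 + Complex.I * (τ:ℂ)‖ * C + 2 / |τ| * ‖ρ‖ with hKA
  have hKA0 : 0 ≤ KA := by positivity
  refine ⟨|τ| * c + 1 + ‖1 - Complex.I * (τ:ℂ)‖ * KA + 1, by positivity, ?_⟩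
  intro t ht
  have ht0 : (0:ℝ) < t := lt_trans one_pos ht
  have ht1 : (1:ℝ) ≤ t := le_of_lt ht
  -- measurability of η
  have hη_m : AEStronglyMeasurable η (volume.restrict (Set.Ioi 1)) :=
    hloc.aestronglyMeasurable.mono_measure
      (Measure.restrict_mono Set.Ioi_subset_Ici_self le_rfl)
  -- integrability of the a2-integrand on Ioi 1
  have hI2 : IntegrableOn (fun u : ℝ => (u:ℂ) ^ a2 * η u) (Set.Ioi 1) := by
    have hm : AEStronglyMeasurable (fun u : ℝ => (u:ℂ) ^ a2 * η u) (volume.restrict (Set.Ioi 1)) :=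
      (((cpow_contOn a2).mono (fun u (hu : u ∈ Set.Ioi (1:ℝ)) => (lt_trans one_pos hu : (0:ℝ) < u))).aestronglyMeasurable
        measurableSet_Ioi).mul hη_m
    refine Integrable.mono' (g := fun u => c * u ^ (-2:ℝ))
      ((integrableOn_Ioi_rpow_of_lt (by norm_num) one_pos).const_mul c) hm ?_
    refine (ae_restrict_iff' measurableSet_Ioi).2 (ae_of_all _ ?_)
    intro u hu
    have hu0 : (0:ℝ) < u := lt_trans one_pos hu
    rw [norm_mul, cpow_norm hu0, ha2re]
    calc u ^ (-2:ℝ) * ‖η u‖ ≤ u ^ (-2:ℝ) * c :=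
          mul_le_mul_of_nonneg_left (hc u (le_of_lt hu)) (Real.rpow_nonneg hu0.le _)
      _ = c * u ^ (-2:ℝ) := mul_comm _ _
  -- tail bound
  have htail : ‖∫ u in Set.Ioi t, (u:ℂ) ^ a2 * η u‖ ≤ c * t⁻¹ := by
    refine le_trans (norm_integral_le_of_norm_le (g := fun u => c * u ^ (-2:ℝ))
      ((integrableOn_Ioi_rpow_of_lt (by norm_num) ht0).const_mul c) ?_) ?_
    · refine (ae_restrict_iff' measurableSet_Ioi).2 (ae_of_all _ ?_)
      intro u hu
      have hu0 : (0:ℝ) < u := lt_trans ht0 hu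
      rw [norm_mul, cpow_norm hu0, ha2re]
      calc u ^ (-2:ℝ) * ‖η u‖ ≤ u ^ (-2:ℝ) * c :=
            mul_le_mul_of_nonneg_left (hc u (le_trans ht1 (le_of_lt hu)))
              (Real.rpow_nonneg hu0.le _)
        _ = c * u ^ (-2:ℝ) := mul_comm _ _
    · rw [integral_const_mul, integral_Ioi_rpow_of_lt (by norm_num) ht0]
      have : ((-2:ℝ) + 1) = -1 := by norm_num
      rw [this, Real.rpow_neg_one]
      have : -t⁻¹ / (-1) = t⁻¹ := by ring
      rw [this]
  -- split of the Ioi 1 integral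
  have hsplit : ∫ u in Set.Ioi (1:ℝ), (u:ℂ) ^ a2 * η u
      = (∫ u in Set.Ioc 1 t, (u:ℂ) ^ a2 * η u) + ∫ u in Set.Ioi t, (u:ℂ) ^ a2 * η u := by
    rw [← setIntegral_union (Set.Ioc_disjoint_Ioi le_rfl) measurableSet_Ioi
      (hI2.mono_set Set.Ioc_subset_Ioi_self) (hI2.mono_set (fun u hu => lt_trans ht hu)),
      Set.Ioc_union_Ioi_eq_Ioi ht1]
  -- A decomposition and bound
  have hIocsub : Set.Ioc (1:ℝ) t ⊆ {u : ℝ | 0 < u} := fun u hu => lt_trans one_pos hu.1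
  have hsubIci : Set.Ioc (1:ℝ) t ⊆ Set.Ici 1 := fun u hu => le_of_lt hu.1
  have hη_mIoc : AEStronglyMeasurable η (volume.restrict (Set.Ioc 1 t)) :=
    hloc.aestronglyMeasurable.mono_measure (Measure.restrict_mono hsubIci le_rfl)
  have icpow : IntegrableOn (fun u : ℝ => (u:ℂ) ^ a1) (Set.Ioc 1 t) := by
    refine intOn_of_bound measurableSet_Ioc measure_Ioc_lt_top
      (((cpow_contOn a1).mono hIocsub).aestronglyMeasurable measurableSet_Ioc) (b := 1) ?_
    intro u hu
    rw [cpow_norm (hIocsub hu), ha1re]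
    exact Real.rpow_le_one_of_one_le_of_nonpos (le_of_lt hu.1) (by norm_num)
  have iB : IntegrableOn (fun u : ℝ => (u:ℂ) ^ a1 * (η u - ρ)) (Set.Ioc 1 t) := by
    refine intOn_of_bound measurableSet_Ioc measure_Ioc_lt_top
      ((((cpow_contOn a1).mono hIocsub).aestronglyMeasurable measurableSet_Ioc).mul
        ((hη_mIoc.sub aestronglyMeasurable_const))) (b := c + ‖ρ‖) ?_
    intro u hu
    rw [norm_mul]
    calc ‖(u:ℂ) ^ a1‖ * ‖η u - ρ‖ ≤ 1 * (c + ‖ρ‖) := by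
          refine mul_le_mul ?_ ?_ (norm_nonneg _) one_pos.le
          · rw [cpow_norm (hIocsub hu), ha1re]
            exact Real.rpow_le_one_of_one_le_of_nonpos (le_of_lt hu.1) (by norm_num)
          · exact le_trans (norm_sub_le _ _) (add_le_add (hc u (le_of_lt hu.1)) le_rfl)
      _ = c + ‖ρ‖ := one_mul _
  have hcpow_val : ∫ u in Set.Ioc (1:ℝ) t, (u:ℂ) ^ a1
      = ((t:ℂ) ^ (-(Complex.I * τ)) - 1) / (-(Complex.I * τ)) := by
    rw [← intervalIntegral.integral_of_le ht1]
    have h0 : (0:ℝ) ∉ Set.uIcc 1 t := by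
      rw [Set.uIcc_of_le ht1]; intro h; linarith [h.1]
    have hne : a1 ≠ -1 := by
      intro h
      have := congrArg Complex.im h
      simp [ha1, hτ] at this
    rw [integral_cpow (Or.inr ⟨hne, h0⟩)]
    have h1 : a1 + 1 = -(Complex.I * τ) := by rw [ha1]; ring
    rw [h1]
    norm_num
  have hAsplit : ∫ u in Set.Ioc (1:ℝ) t, (u:ℂ) ^ a1 * η u
      = (∫ u in Set.Ioc (1:ℝ) t, (u:ℂ) ^ a1 * (η u - ρ))
        + (∫ u in Set.Ioc (1:ℝ) t, (u:ℂ) ^ a1) * ρ := by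
    rw [← integral_mul_const, ← integral_add iB (icpow.mul_const ρ)]
    apply setIntegral_congr_fun measurableSet_Ioc
    intro u hu
    simp only
    ring
  have hAbound : ‖∫ u in Set.Ioc (1:ℝ) t, (u:ℂ) ^ a1 * η u‖ ≤ KA := by
    rw [hAsplit]
    refine le_trans (norm_add_le _ _) ?_
    rw [hKA]
    refine add_le_add (Bkey hτ hc hloc hrot ht) ?_
    rw [norm_mul, hcpow_val, norm_div]
    have hnum : ‖(t:ℂ) ^ (-(Complex.I * τ)) - 1‖ ≤ 2 := by
      refine le_trans (norm_sub_le _ _) ?_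
      rw [cpow_norm ht0]
      have : (-(Complex.I * (τ:ℂ))).re = 0 := by simp
      rw [this, Real.rpow_zero, norm_one]
      norm_num
    have hden : ‖-(Complex.I * (τ:ℂ))‖ = |τ| := by
      rw [norm_neg, norm_mul, Complex.norm_I, one_mul, Complex.norm_real, Real.norm_eq_abs]
    rw [hden]
    refine mul_le_mul_of_nonneg_right ?_ (norm_nonneg ρ)
    gcongr
  -- main identity
  have hre1 : (1 + Complex.I * (τ:ℂ)).re = 1 := by simp
  have hre0 : (Complex.I * (τ:ℂ)).re = 0 := by simp
  have he2 : -1 - (1 + Complex.I * (τ:ℂ)) = a2 := by rw [ha2]; ring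
  have he1 : -1 - Complex.I * (τ:ℂ) = a1 := rfl
  have key : psi η (1 + Complex.I * τ) t - psi η (Complex.I * τ) t
        + (t : ℂ) * mu η (1 + Complex.I * τ)
      = (Complex.I * τ) * ((t:ℂ) * ∫ u in Set.Ioi t, (u:ℂ) ^ a2 * η u)
        - 1 - (1 - Complex.I * τ) * ∫ u in Set.Ioc (1:ℝ) t, (u:ℂ) ^ a1 * η u := by
    rw [psi, psi, mu, hre1, hre0, Real.rpow_one, Real.rpow_zero, he2, he1,
      intervalIntegral.integral_of_le ht1, intervalIntegral.integral_of_le ht1, hsplit]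
    push_cast
    ring
  set Jt : ℂ := ∫ u in Set.Ioi t, (u:ℂ) ^ a2 * η u with hJt
  set A : ℂ := ∫ u in Set.Ioc (1:ℝ) t, (u:ℂ) ^ a1 * η u with hA
  rw [key]
  have hIτ : ‖Complex.I * (τ:ℂ)‖ = |τ| := by
    rw [norm_mul, Complex.norm_I, one_mul, Complex.norm_real, Real.norm_eq_abs]
  have htn : ‖(t:ℂ)‖ = t := by
    rw [Complex.norm_real, Real.norm_eq_abs, abs_of_pos ht0]
  have h1 : ‖Complex.I * (τ:ℂ) * ((t:ℂ) * Jt)‖ ≤ |τ| * c := by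
    rw [norm_mul, hIτ]
    refine mul_le_mul_of_nonneg_left ?_ (abs_nonneg τ)
    rw [norm_mul, htn]
    calc t * ‖Jt‖ ≤ t * (c * t⁻¹) := mul_le_mul_of_nonneg_left htail ht0.le
      _ = c := by field_simp
  have h2 : ‖(1 - Complex.I * (τ:ℂ)) * A‖ ≤ ‖1 - Complex.I * (τ:ℂ)‖ * KA := by
    rw [norm_mul]
    exact mul_le_mul_of_nonneg_left hAbound (norm_nonneg _)
  have h3 := norm_sub_le (Complex.I * (τ:ℂ) * ((t:ℂ) * Jt) - 1) ((1 - Complex.I * (τ:ℂ)) * A)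
  have h4 := norm_sub_le (Complex.I * (τ:ℂ) * ((t:ℂ) * Jt)) (1:ℂ)
  rw [norm_one] at h4
  linarith
end
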